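/- arXiv:2007.13868 — 3 statements merged into one kernel-verified Lean document; each statement's English description precedes it below -/
import Mathlib

section
/- The numbers K_{n,p} satisfy the recursion K_{n,p} = n·K_{n-1,p} + n·K_{n-1,p-1} for n ≥ 2 and p ≥ 1, where K_{n,p} is the number of marked linear chord diagrams on 2n vertices whose marked chord is crossed exactly p times. -/
open scoped BigOperators

/-- A marked linear chord diagram on `2n` vertices: a fixed-point-free involution
(perfect matching) of `Fin (2*n)` together with a distinguished chord, represented
by its left endpoint `a` (so the chord is `{a, f a}` with `a < f a`). -/
def MarkedDiagram (n : ℕ) : Type :=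
  {fa : (Fin (2*n) → Fin (2*n)) × Fin (2*n) //
    (∀ x, fa.1 (fa.1 x) = x) ∧ (∀ x, fa.1 x ≠ x) ∧ fa.2 < fa.1 fa.2}

instance (n : ℕ) : Fintype (MarkedDiagram n) := by
  unfold MarkedDiagram; infer_instance

instance (n : ℕ) : DecidableEq (MarkedDiagram n) := by
  unfold MarkedDiagram; infer_instance

namespace MarkedDiagram

variable {n : ℕ}

/-- The matching. -/
def f (D : MarkedDiagram n) : Fin (2*n) → Fin (2*n) := D.1.1

/-- Left endpoint of the marked chord. -/
def a (D : MarkedDiagram n) : Fin (2*n) := D.1.2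

/-- Right endpoint of the marked chord. -/
def b (D : MarkedDiagram n) : Fin (2*n) := D.1.1 D.1.2

/-- The size of the marked chord: the number of vertices strictly between its endpoints. -/
def size (D : MarkedDiagram n) : ℕ := (D.b : ℕ) - (D.a : ℕ) - 1

/-- Number of chords crossing the marked chord (exactly one endpoint strictly between
the endpoints of the marked chord); each chord is counted via its left endpoint `c < f c`. -/
def crossCount (D : MarkedDiagram n) : ℕ :=
  (Finset.univ.filter (fun c : Fin (2*n) =>
    c < D.f c ∧ Xor (D.a < c ∧ c < D.b) (D.a < D.f c ∧ D.f c < D.b))).card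

/-- Number of chords contained within the marked chord (both endpoints strictly between
the endpoints of the marked chord). -/
def containedCount (D : MarkedDiagram n) : ℕ :=
  (Finset.univ.filter (fun c : Fin (2*n) =>
    c < D.f c ∧ D.a < c ∧ D.f c < D.b)).card

/-- Number of chords containing the marked chord. -/
def containingCount (D : MarkedDiagram n) : ℕ :=
  (Finset.univ.filter (fun c : Fin (2*n) =>
    c < D.f c ∧ c < D.a ∧ D.b < D.f c)).card

/-- Number of chords excluded by the marked chord (both endpoints to the left, or both
to the right, of the marked chord). -/
def excludedCount (D : MarkedDiagram n) : ℕ :=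
  (Finset.univ.filter (fun c : Fin (2*n) =>
    c < D.f c ∧ (D.f c < D.a ∨ D.b < c))).card

end MarkedDiagram

/-- `K n p`: number of marked diagrams whose marked chord is crossed by exactly `p` chords. -/
def Kcount (n p : ℕ) : ℕ := Fintype.card {D : MarkedDiagram n // D.crossCount = p}

/-- `C n p`: number of marked diagrams whose marked chord contains exactly `p` chords. -/
def Ccount (n p : ℕ) : ℕ := Fintype.card {D : MarkedDiagram n // D.containedCount = p}

/-- `G n p`: number of marked diagrams whose marked chord is contained in exactly `p` chords. -/
def Gcount (n p : ℕ) : ℕ := Fintype.card {D : MarkedDiagram n // D.containingCount = p}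

/-- `X n p`: number of marked diagrams with exactly `p` chords excluded by the marked chord. -/
def Xcount (n p : ℕ) : ℕ := Fintype.card {D : MarkedDiagram n // D.excludedCount = p}


namespace CKaux

/-- A perfect matching (fixed-point-free involution) on `α`. -/
def Mtch (α : Type*) : Type _ := {f : α → α // Function.Involutive f ∧ ∀ x, f x ≠ x}

instance (α : Type*) [Fintype α] [DecidableEq α] :
    DecidablePred (fun f : α → α => Function.Involutive f ∧ ∀ x, f x ≠ x) := fun f => by
  unfold Function.Involutive; infer_instance

instance (α : Type*) [Fintype α] [DecidableEq α] : Fintype (Mtch α) :=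
  Subtype.fintype _

variable {α β : Type*}

/-- Number of pairs of `f` with exactly one endpoint satisfying `P`, counted at the
`P`-endpoint. -/
def crossP [Fintype α] (P : α → Prop) [DecidablePred P] (f : Mtch α) : ℕ :=
  (Finset.univ.filter fun x => P x ∧ ¬ P (f.1 x)).card

/-- Transport a matching along an equivalence. -/
def Mtch.map (e : α ≃ β) (f : Mtch α) : Mtch β :=
  ⟨e ∘ f.1 ∘ e.symm, fun x => by simp [f.2.1 (e.symm x)],
    fun x h => f.2.2 (e.symm x) (by simpa using congrArg e.symm h)⟩

def Mtch.mapEquiv (e : α ≃ β) : Mtch α ≃ Mtch β where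
  toFun := Mtch.map e
  invFun := Mtch.map e.symm
  left_inv f := by apply Subtype.ext; funext x; simp [Mtch.map]
  right_inv g := by apply Subtype.ext; funext x; simp [Mtch.map]

lemma crossP_map [Fintype α] [Fintype β] (e : α ≃ β) (P : α → Prop) (Q : β → Prop)
    [DecidablePred P] [DecidablePred Q] (h : ∀ x, Q (e x) ↔ P x) (f : Mtch α) :
    crossP Q (Mtch.map e f) = crossP P f := by
  unfold crossP
  refine (Finset.card_bij (fun x _ => e x) ?_ ?_ ?_).symm
  · intro x hx
    simp only [Finset.mem_filter, Finset.mem_univ, true_and] at hx ⊢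
    have h2 : Q ((Mtch.map e f).1 (e x)) ↔ P (f.1 x) := by
      show Q (e (f.1 (e.symm (e x)))) ↔ _
      rw [Equiv.symm_apply_apply]; exact h _
    rw [h, h2]; exact hx
  · intro x _ y _ hxy; exact e.injective hxy
  · intro y hy
    refine ⟨e.symm y, ?_, by simp⟩
    simp only [Finset.mem_filter, Finset.mem_univ, true_and] at hy ⊢
    have h1 : Q y ↔ P (e.symm y) := by rw [← h (e.symm y)]; simp
    have h2 : Q ((Mtch.map e f).1 y) ↔ P (f.1 (e.symm y)) := by
      show Q (e (f.1 (e.symm y))) ↔ _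
      exact h _
    rw [← h1, ← h2]; exact hy

/-- `crossP` of the complement predicate. -/
lemma crossP_not [Fintype α] (P : α → Prop) [DecidablePred P] (f : Mtch α) :
    crossP P f = crossP (fun x => ¬ P x) f := by
  unfold crossP
  refine Finset.card_bij (fun x _ => f.1 x) ?_ ?_ ?_
  · intro x hx
    simp only [Finset.mem_filter, Finset.mem_univ, true_and, f.2.1 x] at hx ⊢
    tauto
  · intro x _ y _ hxy
    exact f.2.1.injective hxy
  · intro y hy
    refine ⟨f.1 y, ?_, (f.2.1 y)⟩
    simp only [Finset.mem_filter, Finset.mem_univ, true_and, f.2.1 y] at hy ⊢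
    tauto

/-- Restriction of a matching to the complement of the pair `{x0, y}` where `y = f x0`. -/
def Mtch.restrict' [DecidableEq α] (f : Mtch α) (x0 y : α) (hxy : f.1 x0 = y) :
    Mtch {z : α // z ≠ x0 ∧ z ≠ y} where
  val := fun z => ⟨f.1 z.1,
    fun h => z.2.2 ((f.2.1 z.1).symm.trans (by rw [h, hxy])),
    fun h => z.2.1 (f.2.1.injective (h.trans hxy.symm))⟩
  property := by
    constructor
    · intro z; apply Subtype.ext; exact f.2.1 z.1
    · intro z h; exact f.2.2 z.1 (congrArg Subtype.val h)

/-- Extension of a matching by the new pair `{x0, y}`. -/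
def Mtch.extend [DecidableEq α] (x0 : α) (y : {y : α // y ≠ x0})
    (g : Mtch {z : α // z ≠ x0 ∧ z ≠ y.1}) : Mtch α where
  val := fun x => if hx : x = x0 then y.1 else if hxy : x = y.1 then x0
      else (g.1 ⟨x, hx, hxy⟩).1
  property := by
    obtain ⟨y, hy⟩ := y
    constructor
    · intro x
      by_cases hx : x = x0
      · subst hx; simp [hy]
      · by_cases hxy : x = y
        · subst hxy; simp [hx]
        · have h1 := (g.1 ⟨x, hx, hxy⟩).2.1
          have h2 := (g.1 ⟨x, hx, hxy⟩).2.2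
          simp only [dif_neg hx, dif_neg hxy, dif_neg h1, dif_neg h2]
          have := congrArg Subtype.val (g.2.1 ⟨x, hx, hxy⟩)
          simpa using this
    · intro x
      by_cases hx : x = x0
      · subst hx
        intro h
        simp at h
        exact hy h
      · by_cases hxy : x = y
        · subst hxy
          intro h
          simp [hx] at h
          exact hx h.symm
        · intro h
          simp only [dif_neg hx, dif_neg hxy] at h
          exact g.2.2 ⟨x, hx, hxy⟩ (Subtype.ext h)

lemma Mtch.extend_apply_x0 [DecidableEq α] (x0 : α) (y : {y : α // y ≠ x0})
    (g : Mtch {z : α // z ≠ x0 ∧ z ≠ y.1}) : (Mtch.extend x0 y g).1 x0 = y.1 :=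
  dif_pos rfl

lemma Mtch.restrict'_extend [DecidableEq α] (x0 : α) (y : {y : α // y ≠ x0})
    (g : Mtch {z : α // z ≠ x0 ∧ z ≠ y.1}) (h : (Mtch.extend x0 y g).1 x0 = y.1) :
    (Mtch.extend x0 y g).restrict' x0 y.1 h = g := by
  apply Subtype.ext; funext z
  apply Subtype.ext
  show (Mtch.extend x0 y g).1 z.1 = _
  simp [Mtch.extend, z.2.1, z.2.2]

lemma Mtch.extend_restrict' [DecidableEq α] (f : Mtch α) (x0 y : α) (hxy : f.1 x0 = y) :
    Mtch.extend x0 ⟨y, hxy ▸ f.2.2 x0⟩ (f.restrict' x0 y hxy) = f := by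
  apply Subtype.ext; funext x
  by_cases hx : x = x0
  · subst hx; simp [Mtch.extend, hxy]
  · by_cases hxy' : x = y
    · subst hxy'; simp [Mtch.extend, hx, ← hxy, f.2.1 x0]
    · simp [Mtch.extend, Mtch.restrict', hx, hxy']


lemma crossP_restrict' [Fintype α] [DecidableEq α] (P : α → Prop) [DecidablePred P]
    (f : Mtch α) (x0 y : α) (hxy : f.1 x0 = y) :
    crossP P f = crossP (fun z => P z.1) (f.restrict' x0 y hxy)
      + (if Xor (P x0) (P y) then 1 else 0) := by
  classical
  have hyx0 : y ≠ x0 := hxy ▸ f.2.2 x0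
  have hfy : f.1 y = x0 := by rw [← hxy, f.2.1 x0]
  have hsplit := Finset.card_filter_add_card_filter_not
    (s := Finset.univ.filter fun x => P x ∧ ¬ P (f.1 x)) (p := fun x => x = x0 ∨ x = y)
  have hB : ((Finset.univ.filter fun x => P x ∧ ¬ P (f.1 x)).filter
      (fun x => ¬(x = x0 ∨ x = y))).card
      = crossP (fun z : {z : α // z ≠ x0 ∧ z ≠ y} => P z.1) (f.restrict' x0 y hxy) := by
    unfold crossP
    refine Finset.card_bij (fun x hx => ⟨x, ?_⟩) ?_ ?_ ?_
    · simp only [Finset.mem_filter] at hx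
      exact ⟨fun h => hx.2 (Or.inl h), fun h => hx.2 (Or.inr h)⟩
    · intro x hx
      simp only [Finset.mem_filter, Finset.mem_univ, true_and] at hx ⊢
      exact hx.1
    · intro x hx x' hx' h
      exact congrArg Subtype.val h
    · intro z hz
      refine ⟨z.1, ?_, rfl⟩
      simp only [Finset.mem_filter, Finset.mem_univ, true_and] at hz ⊢
      exact ⟨hz, fun h => h.elim z.2.1 z.2.2⟩
  have hA : ((Finset.univ.filter fun x => P x ∧ ¬ P (f.1 x)).filter
      (fun x => x = x0 ∨ x = y)).card = if Xor (P x0) (P y) then 1 else 0 := by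
    by_cases h0 : P x0 <;> by_cases h1 : P y
    · have he : ((Finset.univ.filter fun x => P x ∧ ¬ P (f.1 x)).filter
          (fun x => x = x0 ∨ x = y)) = ∅ := by
        ext x
        simp only [Finset.mem_filter, Finset.mem_univ, true_and, Finset.notMem_empty,
          iff_false, not_and]
        rintro ⟨hPx, hPfx⟩ (rfl | rfl)
        · exact hPfx (hxy ▸ h1)
        · exact hPfx (hfy ▸ h0)
      rw [he]
      simp [Xor, h0, h1]
    · have he : ((Finset.univ.filter fun x => P x ∧ ¬ P (f.1 x)).filter
          (fun x => x = x0 ∨ x = y)) = {x0} := by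
        ext x
        simp only [Finset.mem_filter, Finset.mem_univ, true_and, Finset.mem_singleton]
        constructor
        · rintro ⟨⟨hPx, hPfx⟩, (rfl | rfl)⟩
          · rfl
          · exact absurd hPx h1
        · rintro rfl
          exact ⟨⟨h0, fun h => h1 (hxy ▸ h)⟩, Or.inl rfl⟩
      rw [he]
      simp [Xor, h0, h1]
    · have he : ((Finset.univ.filter fun x => P x ∧ ¬ P (f.1 x)).filter
          (fun x => x = x0 ∨ x = y)) = {y} := by
        ext x
        simp only [Finset.mem_filter, Finset.mem_univ, true_and, Finset.mem_singleton]
        constructor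
        · rintro ⟨⟨hPx, hPfx⟩, (rfl | rfl)⟩
          · exact absurd hPx h0
          · rfl
        · rintro rfl
          exact ⟨⟨h1, fun h => h0 (hfy ▸ h)⟩, Or.inr rfl⟩
      rw [he]
      simp [Xor, h0, h1]
    · have he : ((Finset.univ.filter fun x => P x ∧ ¬ P (f.1 x)).filter
          (fun x => x = x0 ∨ x = y)) = ∅ := by
        ext x
        simp only [Finset.mem_filter, Finset.mem_univ, true_and, Finset.notMem_empty,
          iff_false, not_and]
        rintro ⟨hPx, hPfx⟩ (rfl | rfl)
        · exact absurd hPx h0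
        · exact absurd hPx h1
      rw [he]
      simp [Xor, h0, h1]
  show (Finset.univ.filter fun x => P x ∧ ¬ P (f.1 x)).card = _
  rw [← hsplit, hA, hB]
  ring

lemma card_fiber [Fintype α] [DecidableEq α] (x0 y : α) (hy : y ≠ x0)
    (P : α → Prop) [DecidablePred P] (q : ℕ) :
    Fintype.card {f : Mtch α // f.1 x0 = y ∧ crossP P f = q} =
    Fintype.card {g : Mtch {z : α // z ≠ x0 ∧ z ≠ y} //
      crossP (fun z => P z.1) g + (if Xor (P x0) (P y) then 1 else 0) = q} := by
  apply Fintype.card_congr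
  refine ⟨fun fp => ⟨fp.1.restrict' x0 y fp.2.1, ?_⟩, fun gp => ?_, ?_, ?_⟩
  · rw [← crossP_restrict' P fp.1 x0 y fp.2.1]
    exact fp.2.2
  · refine ⟨Mtch.extend x0 ⟨y, hy⟩ gp.1, Mtch.extend_apply_x0 x0 ⟨y, hy⟩ gp.1, ?_⟩
    rw [crossP_restrict' P _ x0 y (Mtch.extend_apply_x0 x0 ⟨y, hy⟩ gp.1),
      Mtch.restrict'_extend]
    exact gp.2
  · intro fp
    apply Subtype.ext
    exact Mtch.extend_restrict' fp.1 x0 y fp.2.1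
  · intro gp
    apply Subtype.ext
    exact Mtch.restrict'_extend x0 ⟨y, hy⟩ gp.1 (Mtch.extend_apply_x0 x0 ⟨y, hy⟩ gp.1)

/-- `N s t p`: the number of perfect matchings of an `s + t` set, `s` points "inside" and
`t` points "outside", with exactly `p` in-out pairs. -/
def Ncount (s t p : ℕ) : ℕ :=
  Fintype.card {f : Mtch (Fin s ⊕ Fin t) // crossP (fun x => x.isLeft = true) f = p}

lemma Ncount_of_equiv {α : Type*} [Fintype α] [DecidableEq α] (P : α → Prop)
    [DecidablePred P] {s t : ℕ} (hs : Fintype.card {x // P x} = s)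
    (ht : Fintype.card {x // ¬ P x} = t) (p : ℕ) :
    Fintype.card {f : Mtch α // crossP P f = p} = Ncount s t p := by
  classical
  let e : α ≃ Fin s ⊕ Fin t :=
    (Equiv.sumCompl P).symm.trans
      (Equiv.sumCongr (Fintype.equivFinOfCardEq hs) (Fintype.equivFinOfCardEq ht))
  have he : ∀ x, ((e x).isLeft = true) ↔ P x := by
    intro x
    by_cases hx : P x
    · simp only [e, Equiv.trans_apply, Equiv.sumCompl_symm_apply_of_pos hx]
      simp [hx]
    · simp only [e, Equiv.trans_apply, Equiv.sumCompl_symm_apply_of_neg hx]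
      simp [hx]
  exact Fintype.card_congr (Equiv.subtypeEquiv (Mtch.mapEquiv e)
    (fun f => by rw [show Mtch.mapEquiv e f = Mtch.map e f from rfl,
      crossP_map e P _ he]))

lemma card_compl_pair {α : Type*} [Fintype α] [DecidableEq α] (a b : α) (h : b ≠ a) :
    Fintype.card {z : α // z ≠ a ∧ z ≠ b} = Fintype.card α - 2 := by
  rw [Fintype.card_subtype]
  have : (Finset.univ.filter fun z : α => z ≠ a ∧ z ≠ b) = Finset.univ \ {a, b} := by
    ext z
    simp [not_or, and_comm]
  rw [this, Finset.card_sdiff_of_subset (Finset.subset_univ _), Finset.card_pair (fun hh => h hh.symm)]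
  rfl


lemma card_ne {α : Type*} [Fintype α] [DecidableEq α] (a : α) :
    Fintype.card {z : α // z ≠ a} = Fintype.card α - 1 := by
  rw [Fintype.card_subtype]
  have : (Finset.univ.filter fun z : α => z ≠ a) = Finset.univ.erase a := by
    ext z; simp [Finset.mem_erase]
  rw [this, Finset.card_erase_of_mem (Finset.mem_univ a)]
  rfl

def sumLeftSubtype {A B : Type*} (Q : A ⊕ B → Prop) :
    {x : A ⊕ B // Q x ∧ x.isLeft = true} ≃ {a : A // Q (Sum.inl a)} where
  toFun x := match x with
    | ⟨Sum.inl a, h⟩ => ⟨a, h.1⟩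
    | ⟨Sum.inr _, h⟩ => absurd h.2 (by simp)
  invFun a := ⟨Sum.inl a.1, a.2, rfl⟩
  left_inv x := by
    obtain ⟨a | b, h⟩ := x
    · rfl
    · exact absurd h.2 (by simp)
  right_inv a := rfl

def sumRightSubtype {A B : Type*} (Q : A ⊕ B → Prop) :
    {x : A ⊕ B // Q x ∧ ¬ (x.isLeft = true)} ≃ {b : B // Q (Sum.inr b)} where
  toFun x := match x with
    | ⟨Sum.inl _, h⟩ => absurd rfl h.2
    | ⟨Sum.inr b, h⟩ => ⟨b, h.1⟩
  invFun b := ⟨Sum.inr b.1, b.2, by simp⟩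
  left_inv x := by
    obtain ⟨a | b, h⟩ := x
    · exact absurd rfl h.2
    · rfl
  right_inv b := rfl

lemma Ncount_succ (s t p : ℕ) :
    Ncount (s+1) t (p+1) = s * Ncount (s-1) t (p+1) + t * Ncount s (t-1) p := by
  classical
  set x0 : (Fin (s+1) ⊕ Fin t) := Sum.inl (Fin.last s) with hx0
  have step1 : Ncount (s+1) t (p+1)
      = ∑ y : (Fin (s+1) ⊕ Fin t), Fintype.card {f : Mtch (Fin (s+1) ⊕ Fin t) // f.1 x0 = y
          ∧ crossP (fun x : (Fin (s+1) ⊕ Fin t) => x.isLeft = true) f = p+1} := by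
    rw [Ncount, Fintype.card_subtype,
      Finset.card_eq_sum_card_fiberwise (f := fun f : Mtch (Fin (s+1) ⊕ Fin t) => f.1 x0)
        (t := Finset.univ) (fun _ _ => Finset.mem_univ _)]
    refine Finset.sum_congr rfl ?_
    intro y _
    rw [Finset.filter_filter, Fintype.card_subtype]
    congr 1
    ext f
    simp only [Finset.mem_filter, Finset.mem_univ, true_and]
    exact and_comm
  have hfib_inl : ∀ j : Fin (s+1),
      Fintype.card {f : Mtch (Fin (s+1) ⊕ Fin t) // f.1 x0 = Sum.inl j
          ∧ crossP (fun x : (Fin (s+1) ⊕ Fin t) => x.isLeft = true) f = p+1}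
      = if j = Fin.last s then 0 else Ncount (s-1) t (p+1) := by
    intro j
    by_cases hj : j = Fin.last s
    · subst hj
      rw [if_pos rfl, Fintype.card_eq_zero_iff]
      exact ⟨fun f => f.1.2.2 x0 f.2.1⟩
    · rw [if_neg hj]
      have hy : (Sum.inl j : (Fin (s+1) ⊕ Fin t)) ≠ x0 := by simp [hx0, hj]
      rw [card_fiber x0 (Sum.inl j) hy _ (p+1)]
      have hxor : ¬ Xor ((x0 : (Fin (s+1) ⊕ Fin t)).isLeft = true) ((Sum.inl j : (Fin (s+1) ⊕ Fin t)).isLeft = true) := by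
        simp [hx0, Xor]
      rw [if_neg hxor]
      have hcongr : ∀ g : Mtch {z : (Fin (s+1) ⊕ Fin t) // z ≠ x0 ∧ z ≠ Sum.inl j},
          (crossP (fun z => z.1.isLeft = true) g + 0 = p + 1)
            ↔ (crossP (fun z => z.1.isLeft = true) g = p+1) := by
        intro g; omega
      rw [Fintype.card_congr (Equiv.subtypeEquivRight hcongr)]
      refine Ncount_of_equiv _ ?_ ?_ (p+1)
      · rw [Fintype.card_congr ((Equiv.subtypeSubtypeEquivSubtypeInter
            (fun z : (Fin (s+1) ⊕ Fin t) => z ≠ x0 ∧ z ≠ Sum.inl j) (fun z => z.isLeft = true)).trans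
          ((sumLeftSubtype _).trans (Equiv.subtypeEquivRight
            (q := fun i : Fin (s+1) => i ≠ Fin.last s ∧ i ≠ j)
            (fun i => by simp [hx0])))),
          card_compl_pair (Fin.last s) j hj]
        simp only [Fintype.card_fin]
        omega
      · rw [Fintype.card_congr ((Equiv.subtypeSubtypeEquivSubtypeInter
            (fun z : (Fin (s+1) ⊕ Fin t) => z ≠ x0 ∧ z ≠ Sum.inl j) (fun z => ¬ z.isLeft = true)).trans
          ((sumRightSubtype _).trans (Equiv.subtypeUnivEquiv (fun b => by simp [hx0]))))]
        simp only [Fintype.card_fin]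
  have hfib_inr : ∀ j : Fin t,
      Fintype.card {f : Mtch (Fin (s+1) ⊕ Fin t) // f.1 x0 = Sum.inr j
          ∧ crossP (fun x : (Fin (s+1) ⊕ Fin t) => x.isLeft = true) f = p+1}
      = Ncount s (t-1) p := by
    intro j
    have hy : (Sum.inr j : (Fin (s+1) ⊕ Fin t)) ≠ x0 := by simp [hx0]
    rw [card_fiber x0 (Sum.inr j) hy _ (p+1)]
    have hxor : Xor ((x0 : (Fin (s+1) ⊕ Fin t)).isLeft = true) ((Sum.inr j : (Fin (s+1) ⊕ Fin t)).isLeft = true) := by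
      simp [hx0, Xor]
    rw [if_pos hxor]
    have hcongr : ∀ g : Mtch {z : (Fin (s+1) ⊕ Fin t) // z ≠ x0 ∧ z ≠ Sum.inr j},
        (crossP (fun z => z.1.isLeft = true) g + 1 = p + 1)
          ↔ (crossP (fun z => z.1.isLeft = true) g = p) := by
      intro g; omega
    rw [Fintype.card_congr (Equiv.subtypeEquivRight hcongr)]
    refine Ncount_of_equiv _ ?_ ?_ p
    · rw [Fintype.card_congr ((Equiv.subtypeSubtypeEquivSubtypeInter
          (fun z : (Fin (s+1) ⊕ Fin t) => z ≠ x0 ∧ z ≠ Sum.inr j) (fun z => z.isLeft = true)).trans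
        ((sumLeftSubtype _).trans (Equiv.subtypeEquivRight
          (q := fun i : Fin (s+1) => i ≠ Fin.last s)
          (fun i => by simp [hx0])))),
        card_ne (Fin.last s)]
      simp only [Fintype.card_fin]
      omega
    · rw [Fintype.card_congr ((Equiv.subtypeSubtypeEquivSubtypeInter
          (fun z : (Fin (s+1) ⊕ Fin t) => z ≠ x0 ∧ z ≠ Sum.inr j) (fun z => ¬ z.isLeft = true)).trans
        ((sumRightSubtype _).trans (Equiv.subtypeEquivRight
          (q := fun b : Fin t => b ≠ j)
          (fun b => by simp [hx0])))),
        card_ne j]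
      simp only [Fintype.card_fin]
  rw [step1, Fintype.sum_sum_type]
  have h1 : ∑ j : Fin (s+1),
      Fintype.card {f : Mtch (Fin (s+1) ⊕ Fin t) // f.1 x0 = Sum.inl j
          ∧ crossP (fun x : (Fin (s+1) ⊕ Fin t) => x.isLeft = true) f = p+1}
      = s * Ncount (s-1) t (p+1) := by
    rw [Finset.sum_congr rfl (fun j _ => hfib_inl j), Finset.sum_ite,
      Finset.sum_const_zero, Finset.sum_const, zero_add, Finset.filter_ne',
      Finset.card_erase_of_mem (Finset.mem_univ _)]
    simp [mul_comm]
  have h2 : ∑ j : Fin t,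
      Fintype.card {f : Mtch (Fin (s+1) ⊕ Fin t) // f.1 x0 = Sum.inr j
          ∧ crossP (fun x : (Fin (s+1) ⊕ Fin t) => x.isLeft = true) f = p+1}
      = t * Ncount s (t-1) p := by
    rw [Finset.sum_congr rfl (fun j _ => hfib_inr j), Finset.sum_const]
    simp [mul_comm]
  rw [h1, h2]


lemma Ncount_symm (s t p : ℕ) : Ncount s t p = Ncount t s p := by
  classical
  rw [Ncount]
  rw [Fintype.card_congr (Equiv.subtypeEquivRight
    (q := fun f : Mtch (Fin s ⊕ Fin t) => crossP (fun x => ¬ (x.isLeft = true)) f = p)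
    (fun f => by rw [crossP_not]))]
  refine Ncount_of_equiv _ ?_ ?_ p
  · rw [Fintype.card_congr ((Equiv.subtypeEquivRight
      (q := fun x : Fin s ⊕ Fin t => True ∧ ¬ (x.isLeft = true)) (fun x => by tauto)).trans
      ((sumRightSubtype (fun _ => True)).trans (Equiv.subtypeUnivEquiv (fun _ => trivial))))]
    simp only [Fintype.card_fin]
  · rw [Fintype.card_congr ((Equiv.subtypeEquivRight
      (q := fun x : Fin s ⊕ Fin t => True ∧ (x.isLeft = true)) (fun x => by tauto)).trans
      ((sumLeftSubtype (fun _ => True)).trans (Equiv.subtypeUnivEquiv (fun _ => trivial))))]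
    simp only [Fintype.card_fin]

lemma Ncount_succ' (s t p : ℕ) :
    Ncount s (t+1) (p+1) = t * Ncount s (t-1) (p+1) + s * Ncount (s-1) t p := by
  rw [Ncount_symm, Ncount_succ, Ncount_symm (t-1), Ncount_symm t]

lemma Ncount_left0 (t p : ℕ) : Ncount 0 t (p+1) = 0 := by
  rw [Ncount, Fintype.card_eq_zero_iff]
  refine ⟨fun fp => ?_⟩
  have h := fp.2
  have he : (Finset.univ.filter fun x : Fin 0 ⊕ Fin t =>
      (x.isLeft = true) ∧ ¬ ((fp.1.1 x).isLeft = true)) = ∅ := by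
    ext x
    rcases x with i | b
    · exact absurd i.2 (by omega)
    · simp
  rw [crossP, he] at h
  simp at h

lemma Ncount_right0 (s p : ℕ) : Ncount s 0 (p+1) = 0 := by
  rw [Ncount_symm]; exact Ncount_left0 s p

def diagMtch {n : ℕ} (D : MarkedDiagram n) : Mtch (Fin (2*n)) :=
  ⟨D.1.1, D.2.1, D.2.2.1⟩

lemma crossCount_eq_crossP {n : ℕ} (D : MarkedDiagram n) :
    D.crossCount = crossP (fun z : Fin (2*n) => D.a < z ∧ z < D.b) (diagMtch D) := by
  classical
  have finv : ∀ x, D.1.1 (D.1.1 x) = x := D.2.1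
  have fne : ∀ x, D.1.1 x ≠ x := D.2.2.1
  rw [MarkedDiagram.crossCount, crossP]
  simp only [MarkedDiagram.f, diagMtch]
  refine Finset.card_bij'
    (fun c _ => if D.a < c ∧ c < D.b then c else D.1.1 c)
    (fun x _ => if x < D.1.1 x then x else D.1.1 x) ?_ ?_ ?_ ?_
  · intro c hc
    replace hc := (Finset.mem_filter.mp hc).2
    refine Finset.mem_filter.mpr ⟨Finset.mem_univ _, ?_⟩
    obtain ⟨hlt, hx⟩ := hc
    rcases hx with ⟨h1, h2⟩ | ⟨h1, h2⟩
    · rw [if_pos h1]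
      exact ⟨h1, h2⟩
    · rw [if_neg h2]
      refine ⟨h1, ?_⟩
      rw [finv c]
      exact h2
  · intro x hx
    replace hx := (Finset.mem_filter.mp hx).2
    refine Finset.mem_filter.mpr ⟨Finset.mem_univ _, ?_⟩
    obtain ⟨h1, h2⟩ := hx
    rcases lt_or_gt_of_ne (fne x) with hlt | hgt
    · rw [if_neg (not_lt.mpr hlt.le)]
      refine ⟨?_, Or.inr ⟨?_, h2⟩⟩
      · rw [finv x]; exact hlt
      · rw [finv x]; exact h1
    · rw [if_pos hgt]
      exact ⟨hgt, Or.inl ⟨h1, h2⟩⟩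
  · intro c hc
    replace hc := (Finset.mem_filter.mp hc).2
    obtain ⟨hlt, _⟩ := hc
    by_cases h1 : D.a < c ∧ c < D.b
    · simp only [if_pos h1, if_pos hlt]
    · simp only [if_neg h1, finv c]
      rw [if_neg (asymm hlt)]
  · intro x hx
    replace hx := (Finset.mem_filter.mp hx).2
    obtain ⟨h1, h2⟩ := hx
    by_cases hlt : x < D.1.1 x
    · simp only [if_pos hlt, if_pos h1]
    · simp only [if_neg hlt, if_neg h2, finv x]

lemma card_diag_fiber {n : ℕ} (p : ℕ) (a y : Fin (2*n)) (hay : a < y) :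
    Fintype.card {D : MarkedDiagram n // D.crossCount = p ∧ D.a = a ∧ D.b = y}
    = Ncount ((y:ℕ) - (a:ℕ) - 1) (2*n - 2 - ((y:ℕ) - (a:ℕ) - 1)) p := by
  classical
  have hya : y ≠ a := ne_of_gt hay
  -- Step 1: to matchings with a distinguished value at `a`
  have e1 : {D : MarkedDiagram n // D.crossCount = p ∧ D.a = a ∧ D.b = y}
      ≃ {f : Mtch (Fin (2*n)) // f.1 a = y ∧ crossP (fun z => a < z ∧ z < y) f = p} := by
    refine ⟨fun Dp => ⟨diagMtch Dp.1, ?_, ?_⟩, fun fp => ?_, ?_, ?_⟩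
    · show Dp.1.1.1 a = y
      exact (congrArg Dp.1.1.1 (Dp.2.2.1 : Dp.1.1.2 = a)).symm.trans Dp.2.2.2
    · have h := crossCount_eq_crossP Dp.1
      rw [Dp.2.2.1, Dp.2.2.2] at h
      rw [← h]
      exact Dp.2.1
    · refine ⟨⟨(fp.1.1, a), fp.1.2.1, fp.1.2.2, ?_⟩, ?_, rfl, ?_⟩
      · show a < fp.1.1 a
        rw [fp.2.1]
        exact hay
      · refine (crossCount_eq_crossP _).trans ?_
        show crossP (fun z => a < z ∧ z < fp.1.1 a) fp.1 = p
        rw [fp.2.1]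
        exact fp.2.2
      · exact fp.2.1
    · intro Dp
      apply Subtype.ext
      apply Subtype.ext
      exact Prod.ext rfl Dp.2.2.1.symm
    · intro fp
      apply Subtype.ext
      apply Subtype.ext
      rfl
  rw [Fintype.card_congr e1, card_fiber a y hya _ p]
  have hxor : ¬ Xor (a < a ∧ a < y) (a < y ∧ y < y) := by
    simp [Xor, lt_irrefl]
  have hcongr : ∀ g : Mtch {z : Fin (2*n) // z ≠ a ∧ z ≠ y},
      (crossP (fun z => a < z.1 ∧ z.1 < y) g
        + (if Xor (a < a ∧ a < y) (a < y ∧ y < y) then 1 else 0) = p)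
      ↔ (crossP (fun z => a < z.1 ∧ z.1 < y) g = p) := by
    intro g
    rw [if_neg hxor]
    omega
  rw [Fintype.card_congr (Equiv.subtypeEquivRight hcongr)]
  have hin : Fintype.card {x : {z : Fin (2*n) // z ≠ a ∧ z ≠ y} // a < x.1 ∧ x.1 < y}
      = (y:ℕ) - (a:ℕ) - 1 := by
    rw [Fintype.card_congr ((Equiv.subtypeSubtypeEquivSubtypeInter
        (fun z : Fin (2*n) => z ≠ a ∧ z ≠ y) (fun z => a < z ∧ z < y)).trans
      (Equiv.subtypeEquivRight (q := fun z : Fin (2*n) => a < z ∧ z < y)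
        (fun z => ⟨fun h => h.2, fun h => ⟨⟨ne_of_gt h.1, ne_of_lt h.2⟩, h⟩⟩)))]
    rw [Fintype.card_subtype]
    have : (Finset.univ.filter fun z : Fin (2*n) => a < z ∧ z < y) = Finset.Ioo a y := by
      ext z; simp [Finset.mem_Ioo]
    rw [this, Fin.card_Ioo]
  refine Ncount_of_equiv _ hin ?_ p
  rw [Fintype.card_subtype_compl, hin, card_compl_pair a y hya]
  simp only [Fintype.card_fin]

lemma sum_tri (K : ℕ) (g : ℕ → ℕ) :
    ∑ a ∈ Finset.range (K+1), ∑ y ∈ Finset.range (K+1),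
      (if a < y then g (y - a - 1) else 0)
    = ∑ s ∈ Finset.range K, (K - s) * g s := by
  have hinner : ∀ a ∈ Finset.range (K+1),
      ∑ y ∈ Finset.range (K+1), (if a < y then g (y - a - 1) else 0)
      = ∑ i ∈ Finset.range K, (if i < K - a then g i else 0) := by
    intro a _
    rw [← Finset.sum_filter]
    have h1 : (Finset.range (K+1)).filter (fun y => a < y) = Finset.Ico (a+1) (K+1) := by
      ext z; simp only [Finset.mem_filter, Finset.mem_range, Finset.mem_Ico]; omega
    rw [h1, Finset.sum_Ico_eq_sum_range]
    have h2 : K + 1 - (a+1) = K - a := by omega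
    rw [h2, ← Finset.sum_filter]
    have h3 : (Finset.range K).filter (fun i => i < K - a) = Finset.range (K - a) := by
      ext z; simp only [Finset.mem_filter, Finset.mem_range]; omega
    rw [h3]
    refine Finset.sum_congr rfl (fun i _ => ?_)
    congr 1
    omega
  rw [Finset.sum_congr rfl hinner, Finset.sum_comm]
  refine Finset.sum_congr rfl (fun i hi => ?_)
  have h4 : ∀ a ∈ Finset.range (K+1),
      (if i < K - a then g i else 0) = (if a < K - i then g i else 0) := by
    intro a ha
    simp only [Finset.mem_range] at ha
    simp only [Finset.mem_range] at hi
    exact if_congr (by omega) rfl rfl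
  rw [Finset.sum_congr rfl h4, ← Finset.sum_filter]
  have h5 : (Finset.range (K+1)).filter (fun a => a < K - i) = Finset.range (K - i) := by
    ext z; simp only [Finset.mem_filter, Finset.mem_range]; omega
  rw [h5, Finset.sum_const, smul_eq_mul, Finset.card_range]

lemma Kcount_eq_sum (n p : ℕ) :
    Kcount n p = ∑ s ∈ Finset.range (2*n-1),
      (2*n-1-s) * Ncount s (2*n-2-s) p := by
  classical
  have hfib : ∀ ab : Fin (2*n) × Fin (2*n),
      Fintype.card {D : MarkedDiagram n // D.crossCount = p ∧ D.a = ab.1 ∧ D.b = ab.2}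
      = if (ab.1 : ℕ) < (ab.2 : ℕ) then
          Ncount ((ab.2:ℕ) - (ab.1:ℕ) - 1) (2*n - 2 - ((ab.2:ℕ) - (ab.1:ℕ) - 1)) p
        else 0 := by
    intro ab
    by_cases h : (ab.1 : ℕ) < (ab.2 : ℕ)
    · rw [if_pos h]
      exact card_diag_fiber p ab.1 ab.2 h
    · rw [if_neg h, Fintype.card_eq_zero_iff]
      refine ⟨fun Dp => ?_⟩
      have hlt : Dp.1.a < Dp.1.b := Dp.1.2.2.2
      have h2 : ab.1 < ab.2 := lt_of_eq_of_lt Dp.2.2.1.symm (lt_of_lt_of_eq hlt Dp.2.2.2)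
      exact h h2
  have step : Kcount n p = ∑ ab : Fin (2*n) × Fin (2*n),
      Fintype.card {D : MarkedDiagram n // D.crossCount = p ∧ D.a = ab.1 ∧ D.b = ab.2} := by
    rw [Kcount, Fintype.card_subtype,
      Finset.card_eq_sum_card_fiberwise (f := fun D : MarkedDiagram n => (D.a, D.b))
        (t := Finset.univ) (fun _ _ => Finset.mem_univ _)]
    refine Finset.sum_congr rfl (fun ab _ => ?_)
    rw [Finset.filter_filter, Fintype.card_subtype]
    congr 1
    ext D
    simp only [Finset.mem_filter, Finset.mem_univ, true_and, Prod.ext_iff]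
  rw [step, Finset.sum_congr rfl (fun ab _ => hfib ab), Fintype.sum_prod_type]
  have hinner : ∀ x : Fin (2*n),
      (∑ y : Fin (2*n), if ((x, y).1.1 : ℕ) < ((x, y).2.1 : ℕ) then
          Ncount (((x, y).2.1:ℕ) - ((x, y).1.1:ℕ) - 1)
            (2*n - 2 - (((x, y).2.1:ℕ) - ((x, y).1.1:ℕ) - 1)) p else 0)
      = ∑ yv ∈ Finset.range (2*n), (if (x:ℕ) < yv then
          Ncount (yv - (x:ℕ) - 1) (2*n - 2 - (yv - (x:ℕ) - 1)) p else 0) :=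
    fun x => Fin.sum_univ_eq_sum_range (fun yv => if (x:ℕ) < yv then
          Ncount (yv - (x:ℕ) - 1) (2*n - 2 - (yv - (x:ℕ) - 1)) p else 0) (2*n)
  rw [Finset.sum_congr rfl (fun x _ => hinner x),
    Fin.sum_univ_eq_sum_range (fun xv => ∑ yv ∈ Finset.range (2*n),
      (if xv < yv then Ncount (yv - xv - 1) (2*n - 2 - (yv - xv - 1)) p else 0)) (2*n)]
  have := sum_tri (2*n-1) (fun s => Ncount s (2*n-2-s) p)
  rcases Nat.eq_zero_or_pos n with hn | hn
  · subst hn; simp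
  · rw [show 2*n-1+1 = 2*n from by omega] at this
    exact this

set_option maxHeartbeats 1600000 in
lemma expansion_E1 (k q : ℕ) :
    ∑ s ∈ Finset.range (2*k+3), (2*k+3-s) * Ncount s (2*k+2-s) (q+1)
    = (∑ u ∈ Finset.range (2*k+1), ((2*k+1-u)*(u+1)) * Ncount u (2*k-u) (q+1))
    + (∑ u ∈ Finset.range (2*k+1), ((2*k+2-u)*(2*k+1-u)) * Ncount u (2*k-u) q) := by
  rw [show 2*k+3 = (2*k+2)+1 from by omega,
    Finset.sum_range_succ' (fun s => (2*k+2+1-s) * Ncount s (2*k+2-s) (q+1)) (2*k+2)]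
  rw [show (2*k+2+1-0) * Ncount 0 (2*k+2-0) (q+1) = 0 from by rw [Ncount_left0, mul_zero]]
  rw [add_zero]
  have hterm : ∀ i ∈ Finset.range (2*k+2),
      (2*k+2+1-(i+1)) * Ncount (i+1) (2*k+2-(i+1)) (q+1)
      = (2*k+2-i) * (i * Ncount (i-1) (2*k+1-i) (q+1))
        + (2*k+2-i) * ((2*k+1-i) * Ncount i (2*k-i) q) := by
    intro i hi
    have hi' := Finset.mem_range.mp hi
    rw [show 2*k+2+1-(i+1) = 2*k+2-i from by omega,
      show 2*k+2-(i+1) = 2*k+1-i from by omega,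
      Ncount_succ i (2*k+1-i) q,
      show (2*k+1-i)-1 = 2*k-i from by omega, Nat.mul_add]
  rw [Finset.sum_congr rfl hterm, Finset.sum_add_distrib]
  congr 1
  · rw [show 2*k+2 = (2*k+1)+1 from by omega, Finset.sum_range_succ']
    rw [show (2*k+1+1-0) * (0 * Ncount (0-1) (2*k+1-0) (q+1)) = 0 from by rw [zero_mul, mul_zero]]
    rw [add_zero]
    refine Finset.sum_congr rfl (fun u hu => ?_)
    have hu' := Finset.mem_range.mp hu
    rw [show 2*k+1+1-(u+1) = 2*k+1-u from by omega,
      show (u+1)-1 = u from by omega,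
      show 2*k+1-(u+1) = 2*k-u from by omega, ← mul_assoc]
  · rw [show 2*k+2 = (2*k+1)+1 from by omega, Finset.sum_range_succ]
    rw [show 2*k+1-(2*k+1) = 0 from by omega]
    rw [show (2*k+2-(2*k+1)) * (0 * Ncount (2*k+1) (2*k-(2*k+1)) q) = 0 from by rw [zero_mul, mul_zero]]
    rw [add_zero]
    exact Finset.sum_congr rfl (fun u hu => by rw [← mul_assoc])

set_option maxHeartbeats 1600000 in
lemma expansion_E2 (k q : ℕ) :
    ∑ s ∈ Finset.range (2*k+3), (2*k+3-s) * Ncount s (2*k+2-s) (q+1)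
    = (∑ u ∈ Finset.range (2*k+1), ((2*k+3-u)*(2*k+1-u)) * Ncount u (2*k-u) (q+1))
    + (∑ u ∈ Finset.range (2*k+1), ((2*k+2-u)*(u+1)) * Ncount u (2*k-u) q) := by
  rw [show 2*k+3 = (2*k+2)+1 from by omega,
    Finset.sum_range_succ (fun s => (2*k+2+1-s) * Ncount s (2*k+2-s) (q+1)) (2*k+2)]
  rw [show 2*k+2-(2*k+2) = 0 from by omega, Ncount_right0, mul_zero, add_zero]
  have hterm : ∀ s ∈ Finset.range (2*k+2),
      (2*k+2+1-s) * Ncount s (2*k+2-s) (q+1)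
      = (2*k+3-s) * ((2*k+1-s) * Ncount s (2*k-s) (q+1))
        + (2*k+3-s) * (s * Ncount (s-1) (2*k+1-s) q) := by
    intro s hs
    have hs' := Finset.mem_range.mp hs
    rw [show 2*k+2-s = (2*k+1-s)+1 from by omega,
      Ncount_succ' s (2*k+1-s) q,
      show (2*k+1-s)-1 = 2*k-s from by omega,
      show 2*k+2+1-s = 2*k+3-s from by omega, Nat.mul_add]
  rw [Finset.sum_congr rfl hterm, Finset.sum_add_distrib]
  congr 1
  · rw [show 2*k+2 = (2*k+1)+1 from by omega, Finset.sum_range_succ]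
    rw [show 2*k+1-(2*k+1) = 0 from by omega]
    rw [show (2*k+3-(2*k+1)) * (0 * Ncount (2*k+1) (2*k-(2*k+1)) (q+1)) = 0 from by rw [zero_mul, mul_zero]]
    rw [add_zero]
    exact Finset.sum_congr rfl (fun u hu => by rw [← mul_assoc])
  · rw [show 2*k+2 = (2*k+1)+1 from by omega, Finset.sum_range_succ']
    rw [show (2*k+3-0) * (0 * Ncount (0-1) (2*k+1-0) q) = 0 from by rw [zero_mul, mul_zero]]
    rw [add_zero]
    refine Finset.sum_congr rfl (fun u hu => ?_)
    have hu' := Finset.mem_range.mp hu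
    rw [show 2*k+3-(u+1) = 2*k+2-u from by omega,
      show (u+1)-1 = u from by omega,
      show 2*k+1-(u+1) = 2*k-u from by omega, ← mul_assoc]

lemma reflect_B (k q : ℕ) :
    ∑ u ∈ Finset.range (2*k+1), (2*k+1-u) * Ncount u (2*k-u) q
    = ∑ u ∈ Finset.range (2*k+1), (u+1) * Ncount u (2*k-u) q := by
  rw [← Finset.sum_range_reflect (fun u => (2*k+1-u) * Ncount u (2*k-u) q) (2*k+1)]
  refine Finset.sum_congr rfl (fun j hj => ?_)
  have hj' := Finset.mem_range.mp hj
  rw [show 2*k+1-1-j = 2*k-j from by omega,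
    show 2*k+1-(2*k-j) = j+1 from by omega,
    show 2*k-(2*k-j) = j from by omega,
    Ncount_symm (2*k-j) j q]

lemma final_identity (k q : ℕ) :
    ∑ s ∈ Finset.range (2*k+3), (2*k+3-s) * Ncount s (2*k+2-s) (q+1)
    = (k+2) * (∑ s ∈ Finset.range (2*k+1), (2*k+1-s) * Ncount s (2*k-s) (q+1))
    + (k+2) * (∑ s ∈ Finset.range (2*k+1), (2*k+1-s) * Ncount s (2*k-s) q) := by
  have hB1 : ∑ u ∈ Finset.range (2*k+1), (2*k+2-u) * Ncount u (2*k-u) q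
      = (∑ u ∈ Finset.range (2*k+1), (2*k+1-u) * Ncount u (2*k-u) q)
        + ∑ u ∈ Finset.range (2*k+1), Ncount u (2*k-u) q := by
    rw [← Finset.sum_add_distrib]
    refine Finset.sum_congr rfl (fun u hu => ?_)
    have hu' := Finset.mem_range.mp hu
    rw [show 2*k+2-u = (2*k+1-u)+1 from by omega, add_mul, one_mul]
  have h2B2 : 2 * (∑ u ∈ Finset.range (2*k+1), (2*k+1-u) * Ncount u (2*k-u) q)
      = (2*k+2) * ∑ u ∈ Finset.range (2*k+1), Ncount u (2*k-u) q := by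
    rw [two_mul]
    nth_rewrite 2 [reflect_B]
    rw [← Finset.sum_add_distrib, Finset.mul_sum]
    refine Finset.sum_congr rfl (fun u hu => ?_)
    have hu' := Finset.mem_range.mp hu
    rw [← add_mul, show (2*k+1-u) + (u+1) = 2*k+2 from by omega]
  have hT : ∀ u ∈ Finset.range (2*k+1),
      ((2*k+1-u)*(u+1)) * Ncount u (2*k-u) (q+1)
        + ((2*k+3-u)*(2*k+1-u)) * Ncount u (2*k-u) (q+1)
      = (2*k+4) * ((2*k+1-u) * Ncount u (2*k-u) (q+1)) := by
    intro u hu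
    have hu' := Finset.mem_range.mp hu
    obtain ⟨w, hw⟩ : ∃ w, u + w = 2*k+1 := ⟨2*k+1-u, by omega⟩
    rw [show 2*k+1-u = w from by omega, show 2*k+3-u = w+2 from by omega,
      show 2*k+4 = u+w+3 from by omega]
    ring
  have hU : ∀ u ∈ Finset.range (2*k+1),
      ((2*k+2-u)*(2*k+1-u)) * Ncount u (2*k-u) q
        + ((2*k+2-u)*(u+1)) * Ncount u (2*k-u) q
      = (2*k+2) * ((2*k+2-u) * Ncount u (2*k-u) q) := by
    intro u hu
    have hu' := Finset.mem_range.mp hu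
    obtain ⟨w, hw⟩ : ∃ w, u + w = 2*k+1 := ⟨2*k+1-u, by omega⟩
    rw [show 2*k+1-u = w from by omega, show 2*k+2-u = w+1 from by omega,
      show 2*k+2 = u+w+1 from by omega]
    ring
  have h2L : 2 * (∑ s ∈ Finset.range (2*k+3), (2*k+3-s) * Ncount s (2*k+2-s) (q+1))
      = (2*k+4) * (∑ u ∈ Finset.range (2*k+1), (2*k+1-u) * Ncount u (2*k-u) (q+1))
        + (2*k+2) * (∑ u ∈ Finset.range (2*k+1), (2*k+2-u) * Ncount u (2*k-u) q) := by
    rw [two_mul]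
    nth_rewrite 1 [expansion_E1]
    nth_rewrite 1 [expansion_E2]
    rw [show ∀ a b c d : ℕ, (a + b) + (c + d) = (a + c) + (b + d) from fun a b c d => by ring]
    rw [← Finset.sum_add_distrib, ← Finset.sum_add_distrib]
    rw [Finset.sum_congr rfl hT, Finset.sum_congr rfl hU, ← Finset.mul_sum, ← Finset.mul_sum]
  refine Nat.eq_of_mul_eq_mul_left (show 0 < 2 from by norm_num) ?_
  rw [h2L, hB1, Nat.mul_add (2*k+2), ← h2B2]
  ring

end CKaux

theorem K_recursion (n p : ℕ) (hn : 2 ≤ n) (hp : 1 ≤ p) :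
    Kcount n p = n * Kcount (n-1) p + n * Kcount (n-1) (p-1) := by
  obtain ⟨k, rfl⟩ : ∃ k, n = k + 2 := ⟨n - 2, by omega⟩
  obtain ⟨q, rfl⟩ : ∃ q, p = q + 1 := ⟨p - 1, by omega⟩
  rw [show k+2-1 = k+1 from by omega, show q+1-1 = q from by omega]
  rw [CKaux.Kcount_eq_sum (k+2) (q+1), CKaux.Kcount_eq_sum (k+1) (q+1),
    CKaux.Kcount_eq_sum (k+1) q]
  rw [show 2*(k+2)-1 = 2*k+3 from by omega, show 2*(k+2)-2 = 2*k+2 from by omega,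
    show 2*(k+1)-1 = 2*k+1 from by omega, show 2*(k+1)-2 = 2*k from by omega]
  exact CKaux.final_identity k q
end

section
/- For the probability distribution 𝒦_n(p) = K_{n,p}/(n·(2n-1)!!) of the number of chords crossing the marked chord in a uniformly random marked linear chord diagram on 2n vertices, the m-th factorial moment equals Σ_{p} p!/(p-m)!·𝒦_n(p) = ((n-1)!/(n-m-1)!)·m!/(2m+1)!! for 0 ≤ m ≤ n-1. -/
open scoped BigOperators

open scoped Nat

-- ### Auxiliary development


/-- Fixed-point-free involutions. -/
def FpfInv (α : Type*) : Type _ :=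
  {f : α → α // (∀ x, f (f x) = x) ∧ ∀ x, f x ≠ x}

instance (α : Type*) [DecidableEq α] [Fintype α] : Fintype (FpfInv α) := by
  unfold FpfInv; infer_instance

instance (α : Type*) [DecidableEq α] [Fintype α] : DecidableEq (FpfInv α) := by
  unfold FpfInv; infer_instance

namespace FpfInv

variable {α : Type*} [DecidableEq α]

def paste (x0 j : α) (g : {y : α // y ≠ x0 ∧ y ≠ j} → {y : α // y ≠ x0 ∧ y ≠ j}) : α → α :=
  fun x => if hx : x = x0 then j else if hx' : x = j then x0 else (g ⟨x, hx, hx'⟩ : _).1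

variable {x0 j : α} {g : {y : α // y ≠ x0 ∧ y ≠ j} → {y : α // y ≠ x0 ∧ y ≠ j}}

lemma paste_x0 : paste x0 j g x0 = j := dif_pos rfl

lemma paste_j (hj : j ≠ x0) : paste x0 j g j = x0 := by
  rw [paste, dif_neg hj, dif_pos rfl]

lemma paste_other {x : α} (hx : x ≠ x0) (hx' : x ≠ j) :
    paste x0 j g x = (g ⟨x, hx, hx'⟩ : _).1 := by
  rw [paste, dif_neg hx, dif_neg hx']

/-- fpf involutions with `f x0 = j` correspond to fpf involutions on the complement of `{x0, j}`. -/
def fiberEquiv (x0 j : α) (hj : j ≠ x0) :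
    {f : FpfInv α // f.1 x0 = j} ≃ FpfInv {y : α // y ≠ x0 ∧ y ≠ j} where
  toFun f := ⟨fun y => ⟨f.1.1 y.1,
      fun h => y.2.2 (by
        calc (y : α) = f.1.1 (f.1.1 y.1) := (f.1.2.1 _).symm
        _ = f.1.1 x0 := by rw [h]
        _ = j := f.2),
      fun h => y.2.1 (by
        have h2 : f.1.1 j = x0 := by
          have h3 := congrArg f.1.1 f.2
          rw [f.1.2.1 x0] at h3
          exact h3.symm
        calc (y : α) = f.1.1 (f.1.1 y.1) := (f.1.2.1 _).symm
        _ = f.1.1 j := by rw [h]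
        _ = x0 := h2)⟩,
    fun y => Subtype.ext (f.1.2.1 y.1),
    fun y h => f.1.2.2 y.1 (congrArg Subtype.val h)⟩
  invFun g := ⟨⟨paste x0 j g.1,
      by
        intro x
        by_cases hx : x = x0
        · subst hx; rw [paste_x0, paste_j hj]
        · by_cases hx' : x = j
          · subst hx'; rw [paste_j hj, paste_x0]
          · rw [paste_other hx hx',
              paste_other (g.1 ⟨x, hx, hx'⟩).2.1 (g.1 ⟨x, hx, hx'⟩).2.2]
            exact congrArg Subtype.val (g.2.1 ⟨x, hx, hx'⟩),
      by
        intro x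
        by_cases hx : x = x0
        · subst hx; rw [paste_x0]; exact hj
        · by_cases hx' : x = j
          · subst hx'; rw [paste_j hj]; exact fun h => hj h.symm
          · rw [paste_other hx hx']
            exact fun h => g.2.2 ⟨x, hx, hx'⟩ (Subtype.ext h)⟩,
    paste_x0⟩
  left_inv f := by
    apply Subtype.ext
    apply Subtype.ext
    funext x
    dsimp only
    by_cases hx : x = x0
    · subst hx; rw [paste_x0]; exact f.2.symm
    · by_cases hx' : x = j
      · rw [hx', paste_j hj]
        have h2 : f.1.1 j = x0 := by
          have h3 := congrArg f.1.1 f.2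
          rw [f.1.2.1 x0] at h3
          exact h3.symm
        exact h2.symm
      · rw [paste_other hx hx']
  right_inv g := by
    apply Subtype.ext
    funext y
    apply Subtype.ext
    exact paste_other y.2.1 y.2.2

end FpfInv

lemma card_compl_pair {α : Type*} [DecidableEq α] [Fintype α] {x0 j : α} (hj : j ≠ x0) :
    Fintype.card {y : α // y ≠ x0 ∧ y ≠ j} = Fintype.card α - 2 := by
  rw [Fintype.card_subtype]
  have h1 : (Finset.univ.filter fun y : α => y ≠ x0 ∧ y ≠ j) = Finset.univ \ {x0, j} := by
    ext y
    simp [not_or]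
  rw [h1, Finset.card_sdiff_of_subset (Finset.subset_univ _), Finset.card_univ,
    Finset.card_pair (Ne.symm hj)]

lemma card_fpfInv : ∀ (k : ℕ) (α : Type*) [DecidableEq α] [Fintype α],
    Fintype.card α = 2 * k → Fintype.card (FpfInv α) = (2 * k - 1)‼ := by
  intro k
  induction k with
  | zero =>
    intro α _ _ hcard
    have he : IsEmpty α := Fintype.card_eq_zero_iff.mp (by omega)
    have h1 : Fintype.card (FpfInv α) = 1 := by
      rw [Fintype.card_eq_one_iff]
      refine ⟨⟨fun x => (he.false x).elim, fun x => (he.false x).elim,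
        fun x => (he.false x).elim⟩, ?_⟩
      intro f
      apply Subtype.ext
      funext x
      exact (he.false x).elim
    rw [h1]
    rfl
  | succ k ih =>
    intro α _ _ hcard
    have hpos : 0 < Fintype.card α := by omega
    obtain ⟨x0⟩ := Fintype.card_pos_iff.mp hpos
    classical
    have hfib : ∀ j : α, j ≠ x0 →
        (Finset.univ.filter fun f : FpfInv α => f.1 x0 = j).card = (2 * k - 1)‼ := by
      intro j hj
      rw [← Fintype.card_subtype, Fintype.card_congr (FpfInv.fiberEquiv x0 j hj)]
      apply ih
      rw [card_compl_pair hj]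
      omega
    have hcardsum : Fintype.card (FpfInv α) =
        ∑ j ∈ Finset.univ.erase x0, (Finset.univ.filter fun f : FpfInv α => f.1 x0 = j).card := by
      rw [← Finset.card_univ]
      apply Finset.card_eq_sum_card_fiberwise
      intro f _
      exact Finset.mem_erase.mpr ⟨f.2.2 x0, Finset.mem_univ _⟩
    rw [hcardsum, Finset.sum_congr rfl (fun j hj => hfib j (Finset.mem_erase.mp hj).1),
      Finset.sum_const, smul_eq_mul, Finset.card_erase_of_mem (Finset.mem_univ _),
      Finset.card_univ, hcard]
    have h2 : 2 * (k + 1) - 1 = 2 * k + 1 := by omega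
    rw [h2, Nat.doubleFactorial_add_one]

namespace MarkedDiagram

variable {n : ℕ}

lemma f_f (D : MarkedDiagram n) (x : Fin (2*n)) : D.f (D.f x) = x := D.2.1 x
lemma f_ne (D : MarkedDiagram n) (x : Fin (2*n)) : D.f x ≠ x := D.2.2.1 x
lemma a_lt_b (D : MarkedDiagram n) : D.a < D.b := D.2.2.2
lemma f_a (D : MarkedDiagram n) : D.f D.a = D.b := rfl
lemma f_b (D : MarkedDiagram n) : D.f D.b = D.a := D.f_f D.a
lemma f_inj (D : MarkedDiagram n) : Function.Injective D.f :=
  Function.Involutive.injective D.f_f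

def crossFinset (D : MarkedDiagram n) : Finset (Fin (2*n)) :=
  Finset.univ.filter (fun c : Fin (2*n) =>
    c < D.f c ∧ Xor (D.a < c ∧ c < D.b) (D.a < D.f c ∧ D.f c < D.b))

lemma crossCount_eq (D : MarkedDiagram n) : D.crossCount = D.crossFinset.card := rfl

def leftEnds (D : MarkedDiagram n) : Finset (Fin (2*n)) :=
  Finset.univ.filter (fun c : Fin (2*n) => c < D.f c)

lemma card_leftEnds (D : MarkedDiagram n) : D.leftEnds.card = n := by
  classical
  have hR : (Finset.univ.filter (fun c : Fin (2*n) => D.f c < c)).card = D.leftEnds.card := by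
    apply Finset.card_bij (fun c _ => D.f c)
    · intro c hc
      simp only [leftEnds, Finset.mem_filter, Finset.mem_univ, true_and] at *
      rw [D.f_f]; exact hc
    · intro c hc c' hc' h
      exact D.f_inj h
    · intro c hc
      simp only [leftEnds, Finset.mem_filter, Finset.mem_univ, true_and] at *
      exact ⟨D.f c, by rw [D.f_f]; exact hc, D.f_f c⟩
  have hunion : D.leftEnds ∪ (Finset.univ.filter (fun c : Fin (2*n) => D.f c < c)) =
      Finset.univ := by
    ext c
    simp only [leftEnds, Finset.mem_union, Finset.mem_filter, Finset.mem_univ, true_and,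
      iff_true]
    rcases lt_trichotomy c (D.f c) with h | h | h
    · exact Or.inl h
    · exact absurd h.symm (D.f_ne c)
    · exact Or.inr h
  have hdisj : Disjoint D.leftEnds (Finset.univ.filter (fun c : Fin (2*n) => D.f c < c)) := by
    rw [Finset.disjoint_left]
    intro c hc hc'
    simp only [leftEnds, Finset.mem_filter, Finset.mem_univ, true_and] at hc hc'
    exact absurd (hc.trans hc') (lt_irrefl _)
  have := Finset.card_union_of_disjoint hdisj
  rw [hunion, Finset.card_univ, Fintype.card_fin] at this
  omega

lemma a_mem_leftEnds (D : MarkedDiagram n) : D.a ∈ D.leftEnds := by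
  simp only [leftEnds, Finset.mem_filter, Finset.mem_univ, true_and]
  exact D.a_lt_b

lemma crossFinset_subset (D : MarkedDiagram n) : D.crossFinset ⊆ D.leftEnds.erase D.a := by
  intro c hc
  simp only [crossFinset, Finset.mem_filter, Finset.mem_univ, true_and] at hc
  refine Finset.mem_erase.mpr ⟨?_, ?_⟩
  · rintro rfl
    rcases hc.2 with ⟨⟨h1, _⟩, _⟩ | ⟨⟨_, h2⟩, _⟩
    · exact absurd h1 (lt_irrefl _)
    · exact absurd h2 (lt_irrefl _)
  · simp only [leftEnds, Finset.mem_filter, Finset.mem_univ, true_and]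
    exact hc.1

lemma crossCount_le (D : MarkedDiagram n) : D.crossCount ≤ n - 1 := by
  rw [crossCount_eq]
  calc D.crossFinset.card ≤ (D.leftEnds.erase D.a).card :=
        Finset.card_le_card D.crossFinset_subset
  _ = n - 1 := by rw [Finset.card_erase_of_mem D.a_mem_leftEnds, card_leftEnds]


end MarkedDiagram



/-- Marked diagram together with `m` ordered distinct crossing chords. -/
abbrev FullType (n m : ℕ) : Type _ :=
  Σ D : MarkedDiagram n, (Fin m ↪ {c : Fin (2*n) // c ∈ D.crossFinset})

lemma step1 (n m : ℕ) (hn : 1 ≤ n) :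
    ∑ p ∈ Finset.range n, p.descFactorial m * Kcount n p = Fintype.card (FullType n m) := by
  classical
  have h1 : Fintype.card (FullType n m) =
      ∑ D : MarkedDiagram n, (D.crossCount).descFactorial m := by
    rw [Fintype.card_sigma]
    congr 1
    funext D
    rw [Fintype.card_embedding_eq, Fintype.card_fin, Fintype.card_coe,
      MarkedDiagram.crossCount_eq]
  have h2 : ∀ D : MarkedDiagram n, D.crossCount ∈ Finset.range n := fun D =>
    Finset.mem_range.mpr (by have := D.crossCount_le; omega)
  rw [h1, ← Finset.sum_fiberwise_of_maps_to (g := fun D : MarkedDiagram n => D.crossCount)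
    (fun D _ => h2 D)]
  apply Finset.sum_congr rfl
  intro p _
  have : ∀ D ∈ Finset.univ.filter (fun D : MarkedDiagram n => D.crossCount = p),
      (D.crossCount).descFactorial m = p.descFactorial m := by
    intro D hD
    rw [(Finset.mem_filter.mp hD).2]
  rw [Finset.sum_congr rfl this, Finset.sum_const, smul_eq_mul, Kcount,
    Fintype.card_subtype, mul_comm]

-- Part II : the pattern layer on Fin (2*(m+1))
section PartII

variable {m : ℕ}

def intF (a' : Fin (m+1)) (p : Fin m) : Fin (2*(m+1)) :=
  ⟨(a':ℕ)+1+(p:ℕ), by have := a'.2; have := p.2; omega⟩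

def extF (a' : Fin (m+1)) (q : Fin m) : Fin (2*(m+1)) :=
  ⟨if (q:ℕ) < (a':ℕ) then (q:ℕ) else (q:ℕ)+m+2, by have := a'.2; have := q.2; split <;> omega⟩

lemma intF_lt (a' : Fin (m+1)) (p : Fin m) :
    (a':ℕ) < (intF a' p : ℕ) ∧ ((intF a' p : ℕ)) < (a':ℕ)+m+1 := by
  simp only [intF]; have := p.2; omega

lemma extF_out (a' : Fin (m+1)) (q : Fin m) :
    ((extF a' q : ℕ) < (a':ℕ) ∧ (extF a' q : ℕ) = (q:ℕ)) ∨
      ((a':ℕ)+m+1 < (extF a' q : ℕ) ∧ (extF a' q : ℕ) = (q:ℕ)+m+2) := by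
  simp only [extF]; have := q.2
  split
  · left; omega
  · right; omega

def pattF (a' : Fin (m+1)) (σ τ : Equiv.Perm (Fin m)) : Fin (2*(m+1)) → Fin (2*(m+1)) :=
  fun x =>
    if h1 : (x:ℕ) = (a':ℕ) then ⟨(a':ℕ)+m+1, by have := a'.2; omega⟩
    else if h2 : (x:ℕ) = (a':ℕ)+m+1 then ⟨(a':ℕ), by omega⟩
    else if h3 : (a':ℕ) < (x:ℕ) ∧ (x:ℕ) < (a':ℕ)+m+1 then
      extF a' (τ (σ.symm ⟨(x:ℕ) - (a':ℕ) - 1, by omega⟩))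
    else
      intF a' (σ (τ.symm ⟨if (x:ℕ) < (a':ℕ) then (x:ℕ) else (x:ℕ) - (m+2),
        by have := x.2; have := a'.2; split <;> omega⟩))

variable (a' : Fin (m+1)) (σ τ : Equiv.Perm (Fin m))

lemma pattF_a (x : Fin (2*(m+1))) (hx : (x:ℕ) = (a':ℕ)) :
    ((pattF a' σ τ x : Fin (2*(m+1))) : ℕ) = (a':ℕ)+m+1 := by
  rw [pattF, dif_pos hx]

lemma pattF_b (x : Fin (2*(m+1))) (hx : (x:ℕ) = (a':ℕ)+m+1) :
    ((pattF a' σ τ x) : ℕ) = (a':ℕ) := by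
  have h1 : ¬ (x:ℕ) = (a':ℕ) := by omega
  rw [pattF, dif_neg h1, dif_pos hx]

lemma pattF_int (p : Fin m) :
    pattF a' σ τ (intF a' p) = extF a' (τ (σ.symm p)) := by
  have hv : ((intF a' p : Fin (2*(m+1))) : ℕ) = (a':ℕ)+1+(p:ℕ) := rfl
  have h1 : ¬ ((intF a' p : Fin (2*(m+1))) : ℕ) = (a':ℕ) := by have := p.2; omega
  have h2 : ¬ ((intF a' p : Fin (2*(m+1))) : ℕ) = (a':ℕ)+m+1 := by have := p.2; omega
  have h3 : (a':ℕ) < ((intF a' p : Fin (2*(m+1))) : ℕ) ∧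
      ((intF a' p : Fin (2*(m+1))) : ℕ) < (a':ℕ)+m+1 := by have := p.2; omega
  rw [pattF, dif_neg h1, dif_neg h2, dif_pos h3]
  congr 1
  congr 1
  congr 1
  apply Fin.ext
  show ((intF a' p : Fin (2*(m+1))) : ℕ) - (a':ℕ) - 1 = (p:ℕ)
  simp only [hv]
  have := p.2
  omega

lemma pattF_ext (q : Fin m) :
    pattF a' σ τ (extF a' q) = intF a' (σ (τ.symm q)) := by
  rcases extF_out a' q with ⟨ho, hv⟩ | ⟨ho, hv⟩ <;>
  · have h1 : ¬ ((extF a' q : Fin (2*(m+1))) : ℕ) = (a':ℕ) := by omega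
    have h2 : ¬ ((extF a' q : Fin (2*(m+1))) : ℕ) = (a':ℕ)+m+1 := by omega
    have h3 : ¬ ((a':ℕ) < ((extF a' q : Fin (2*(m+1))) : ℕ) ∧
        ((extF a' q : Fin (2*(m+1))) : ℕ) < (a':ℕ)+m+1) := by omega
    rw [pattF, dif_neg h1, dif_neg h2, dif_neg h3]
    congr 1
    congr 1
    congr 1
    apply Fin.ext
    show (if ((extF a' q : Fin (2*(m+1))) : ℕ) < (a':ℕ) then ((extF a' q : Fin (2*(m+1))) : ℕ)
      else ((extF a' q : Fin (2*(m+1))) : ℕ) - (m+2)) = (q:ℕ)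
    have := q.2
    rw [hv]
    split <;> omega

/-- coverage of `Fin (2*(m+1))` by the four kinds of points. -/
lemma coverF (x : Fin (2*(m+1))) :
    (x:ℕ) = (a':ℕ) ∨ (x:ℕ) = (a':ℕ)+m+1 ∨ (∃ p : Fin m, x = intF a' p) ∨
      (∃ q : Fin m, x = extF a' q) := by
  have hx := x.2
  have ha := a'.2
  by_cases h1 : (x:ℕ) = (a':ℕ)
  · exact Or.inl h1
  by_cases h2 : (x:ℕ) = (a':ℕ)+m+1
  · exact Or.inr (Or.inl h2)
  by_cases h3 : (a':ℕ) < (x:ℕ) ∧ (x:ℕ) < (a':ℕ)+m+1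
  · refine Or.inr (Or.inr (Or.inl ⟨⟨(x:ℕ)-(a':ℕ)-1, by omega⟩, ?_⟩))
    apply Fin.ext
    show (x:ℕ) = (a':ℕ)+1+((x:ℕ)-(a':ℕ)-1)
    omega
  · by_cases h4 : (x:ℕ) < (a':ℕ)
    · refine Or.inr (Or.inr (Or.inr ⟨⟨(x:ℕ), by omega⟩, ?_⟩))
      apply Fin.ext
      show (x:ℕ) = (if ((⟨(x:ℕ), by omega⟩ : Fin m) :ℕ) < (a':ℕ) then ((⟨(x:ℕ), by omega⟩ : Fin m) :ℕ) else _)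
      rw [if_pos (show ((⟨(x:ℕ), by omega⟩ : Fin m) :ℕ) < (a':ℕ) from h4)]
    · refine Or.inr (Or.inr (Or.inr ⟨⟨(x:ℕ)-(m+2), by omega⟩, ?_⟩))
      apply Fin.ext
      show (x:ℕ) = (if ((⟨(x:ℕ)-(m+2), by omega⟩ : Fin m) :ℕ) < (a':ℕ) then ((⟨(x:ℕ)-(m+2), by omega⟩ : Fin m) :ℕ) else ((⟨(x:ℕ)-(m+2), by omega⟩ : Fin m) :ℕ)+m+2)
      rw [if_neg (show ¬ ((⟨(x:ℕ)-(m+2), by omega⟩ : Fin m) :ℕ) < (a':ℕ) from by show ¬ (x:ℕ)-(m+2) < (a':ℕ); omega)]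
      show (x:ℕ) = (x:ℕ)-(m+2)+m+2
      omega

end PartII

section PartII2

variable {m : ℕ}

lemma xor_left {P Q : Prop} (hp : P) (hq : ¬Q) : Xor P Q := Or.inl ⟨hp, hq⟩
lemma xor_right {P Q : Prop} (hp : ¬P) (hq : Q) : Xor P Q := Or.inr ⟨hq, hp⟩

variable (a' : Fin (m+1)) (σ τ : Equiv.Perm (Fin m))

lemma pattF_invol (x : Fin (2*(m+1))) : pattF a' σ τ (pattF a' σ τ x) = x := by
  rcases coverF a' x with h | h | ⟨p, rfl⟩ | ⟨q, rfl⟩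
  · have h1 := pattF_a a' σ τ x h
    have h2 := pattF_b a' σ τ _ h1
    exact Fin.ext (h2.trans h.symm)
  · have h1 := pattF_b a' σ τ x h
    have h2 := pattF_a a' σ τ _ h1
    exact Fin.ext (h2.trans h.symm)
  · rw [pattF_int, pattF_ext, Equiv.symm_apply_apply, Equiv.apply_symm_apply]
  · rw [pattF_ext, pattF_int, Equiv.symm_apply_apply, Equiv.apply_symm_apply]

lemma pattF_ne (x : Fin (2*(m+1))) : pattF a' σ τ x ≠ x := by
  intro heq
  have hv := congrArg Fin.val heq
  rcases coverF a' x with h | h | ⟨p, rfl⟩ | ⟨q, rfl⟩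
  · rw [pattF_a a' σ τ x h, h] at hv; omega
  · rw [pattF_b a' σ τ x h, h] at hv; omega
  · rw [pattF_int] at hv
    have h1 := intF_lt a' p
    rcases extF_out a' (τ (σ.symm p)) with ⟨h2, _⟩ | ⟨h2, _⟩ <;> omega
  · rw [pattF_ext] at hv
    have h1 := intF_lt a' (σ (τ.symm q))
    rcases extF_out a' q with ⟨h2, _⟩ | ⟨h2, _⟩ <;> omega

def PhiD : MarkedDiagram (m+1) :=
  ⟨⟨pattF a' σ τ, ⟨(a':ℕ), by have := a'.2; omega⟩⟩,
    fun x => pattF_invol a' σ τ x,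
    fun x => pattF_ne a' σ τ x,
    by
      dsimp only
      rw [Fin.lt_def]
      rw [pattF_a a' σ τ _ rfl]
      show (a':ℕ) < (a':ℕ)+m+1
      omega⟩

lemma PhiD_f : (PhiD a' σ τ).f = pattF a' σ τ := rfl
lemma PhiD_a : ((PhiD a' σ τ).a : ℕ) = (a' : ℕ) := rfl
lemma PhiD_b : ((PhiD a' σ τ).b : ℕ) = (a' : ℕ) + m + 1 := pattF_a a' σ τ _ rfl

def PhiG (i : Fin m) : Fin (2*(m+1)) :=
  if ((τ i : ℕ)) < (a':ℕ) then extF a' (τ i) else intF a' (σ i)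

lemma extF_val_lt {q : Fin m} (h : (q:ℕ) < (a':ℕ)) : ((extF a' q : Fin (2*(m+1))):ℕ) = (q:ℕ) := by
  show (if (q:ℕ) < (a':ℕ) then (q:ℕ) else (q:ℕ)+m+2) = (q:ℕ)
  rw [if_pos h]

lemma extF_val_ge {q : Fin m} (h : ¬ (q:ℕ) < (a':ℕ)) :
    ((extF a' q : Fin (2*(m+1))):ℕ) = (q:ℕ)+m+2 := by
  show (if (q:ℕ) < (a':ℕ) then (q:ℕ) else (q:ℕ)+m+2) = (q:ℕ)+m+2
  rw [if_neg h]

lemma intF_val (p : Fin m) : ((intF a' p : Fin (2*(m+1))):ℕ) = (a':ℕ)+1+(p:ℕ) := rfl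

lemma PhiG_mem (i : Fin m) : PhiG a' σ τ i ∈ (PhiD a' σ τ).crossFinset := by
  rw [MarkedDiagram.crossFinset, Finset.mem_filter]
  refine ⟨Finset.mem_univ _, ?_⟩
  rw [PhiD_f]
  by_cases hτ : ((τ i : ℕ)) < (a':ℕ)
  · rw [PhiG, if_pos hτ]
    have hfc : pattF a' σ τ (extF a' (τ i)) = intF a' (σ i) := by
      rw [pattF_ext, Equiv.symm_apply_apply]
    rw [hfc]
    have h1 := intF_lt a' (σ i)
    have h2 := extF_val_lt a' hτ
    constructor
    · rw [Fin.lt_def]; omega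
    · refine xor_right (fun hc => ?_) ?_
      · rw [Fin.lt_def, PhiD_a] at hc
        have := hc.1
        omega
      · constructor
        · rw [Fin.lt_def, PhiD_a]; omega
        · rw [Fin.lt_def, PhiD_b]; omega
  · rw [PhiG, if_neg hτ]
    have hfc : pattF a' σ τ (intF a' (σ i)) = extF a' (τ i) := by
      rw [pattF_int, Equiv.symm_apply_apply]
    rw [hfc]
    have h1 := intF_lt a' (σ i)
    have h2 := extF_val_ge a' hτ
    have h3 := (σ i).2
    have h4 := (τ i).2
    constructor
    · rw [Fin.lt_def]; omega
    · refine xor_left ⟨?_, ?_⟩ (fun hc => ?_)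
      · rw [Fin.lt_def, PhiD_a]; omega
      · rw [Fin.lt_def, PhiD_b]; omega
      · have hc2 := hc.2
        rw [Fin.lt_def, PhiD_b] at hc2
        omega

lemma PhiG_inj : Function.Injective (PhiG a' σ τ) := by
  intro i j h
  have hv := congrArg Fin.val h
  rw [PhiG, PhiG] at hv
  by_cases h1 : ((τ i : ℕ)) < (a':ℕ) <;> by_cases h2 : ((τ j : ℕ)) < (a':ℕ)
  · rw [if_pos h1, if_pos h2, extF_val_lt a' h1, extF_val_lt a' h2] at hv
    exact τ.injective (Fin.ext hv)
  · rw [if_pos h1, if_neg h2, extF_val_lt a' h1, intF_val] at hv; omega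
  · rw [if_neg h1, if_pos h2, extF_val_lt a' h2, intF_val] at hv; omega
  · rw [if_neg h1, if_neg h2, intF_val, intF_val] at hv
    exact σ.injective (Fin.ext (by omega))

def Phi : Fin (m+1) × Equiv.Perm (Fin m) × Equiv.Perm (Fin m) → FullType (m+1) m :=
  fun p =>
    ⟨PhiD p.1 p.2.1 p.2.2,
      ⟨fun i => ⟨PhiG p.1 p.2.1 p.2.2 i, PhiG_mem p.1 p.2.1 p.2.2 i⟩,
        fun i j h => PhiG_inj p.1 p.2.1 p.2.2 (congrArg Subtype.val h)⟩⟩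

end PartII2

namespace MarkedDiagram

variable {n : ℕ} (D : MarkedDiagram n)

lemma mem_cross_iff {c : Fin (2*n)} : c ∈ D.crossFinset ↔
    c < D.f c ∧ Xor (D.a < c ∧ c < D.b) (D.a < D.f c ∧ D.f c < D.b) := by
  rw [crossFinset, Finset.mem_filter]
  simp only [Finset.mem_univ, true_and]

variable {D} {c : Fin (2*n)}

lemma cross_ne_a (hc : c ∈ D.crossFinset) : c ≠ D.a :=
  (Finset.mem_erase.mp (D.crossFinset_subset hc)).1

lemma cross_lt (hc : c ∈ D.crossFinset) : c < D.f c := ((mem_cross_iff D).mp hc).1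

lemma cross_xor (hc : c ∈ D.crossFinset) :
    Xor (D.a < c ∧ c < D.b) (D.a < D.f c ∧ D.f c < D.b) := ((mem_cross_iff D).mp hc).2

lemma cross_ne_b (hc : c ∈ D.crossFinset) : c ≠ D.b := by
  intro h
  have h1 := cross_lt hc
  rw [h, D.f_b] at h1
  exact absurd (D.a_lt_b.trans h1) (lt_irrefl _)

lemma cross_f_ne_a (hc : c ∈ D.crossFinset) : D.f c ≠ D.a := by
  intro h
  exact cross_ne_b hc (by rw [← D.f_f c, h, D.f_a])

lemma cross_f_ne_b (hc : c ∈ D.crossFinset) : D.f c ≠ D.b := by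
  intro h
  exact cross_ne_a hc (by rw [← D.f_f c, h, D.f_b])

end MarkedDiagram

section Small

variable {m : ℕ} (D : MarkedDiagram (m+1)) (g : Fin m ↪ {c : Fin (2*(m+1)) // c ∈ D.crossFinset})

open MarkedDiagram

include g

lemma cross_eq_erase : D.crossFinset = D.leftEnds.erase D.a := by
  apply Finset.eq_of_subset_of_card_le D.crossFinset_subset
  rw [Finset.card_erase_of_mem D.a_mem_leftEnds, D.card_leftEnds]
  have h1 : m ≤ Fintype.card {c : Fin (2*(m+1)) // c ∈ D.crossFinset} := by
    calc m = Fintype.card (Fin m) := (Fintype.card_fin m).symm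
    _ ≤ _ := Fintype.card_le_of_embedding g
  rw [Fintype.card_coe] at h1
  omega

lemma card_cross : D.crossFinset.card = m := by
  rw [cross_eq_erase D g, Finset.card_erase_of_mem D.a_mem_leftEnds, D.card_leftEnds]
  omega

lemma image_g : Finset.univ.image (fun i => ((g i : _) : Fin (2*(m+1)))) = D.crossFinset := by
  apply Finset.eq_of_subset_of_card_le
  · intro c hc
    obtain ⟨i, _, rfl⟩ := Finset.mem_image.mp hc
    exact (g i).2
  · have hinj : Function.Injective (fun i : Fin m => ((g i : _) : Fin (2*(m+1)))) :=
      fun i j h => g.injective (Subtype.ext h)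
    rw [card_cross D g, Finset.card_image_of_injective _ hinj, Finset.card_univ,
      Fintype.card_fin]

lemma exists_g {c : Fin (2*(m+1))} (hc : c ∈ D.crossFinset) :
    ∃ i, ((g i : _) : Fin (2*(m+1))) = c := by
  rw [← image_g D g] at hc
  obtain ⟨i, _, h⟩ := Finset.mem_image.mp hc
  exact ⟨i, h⟩

/-- the left endpoint of the chord through an interior point is a crossing chord. -/
lemma chord_mem_cross {x : Fin (2*(m+1))} (h1 : D.a < x) (h2 : x < D.b) :
    (if x < D.f x then x else D.f x) ∈ D.crossFinset := by
  rw [cross_eq_erase D g]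
  by_cases hx : x < D.f x
  · rw [if_pos hx]
    refine Finset.mem_erase.mpr ⟨(ne_of_gt h1 : x ≠ D.a), ?_⟩
    rw [leftEnds, Finset.mem_filter]
    exact ⟨Finset.mem_univ _, hx⟩
  · rw [if_neg hx]
    have hlt : D.f x < x := by
      rcases lt_trichotomy x (D.f x) with h | h | h
      · exact absurd h hx
      · exact absurd h.symm (D.f_ne x)
      · exact h
    refine Finset.mem_erase.mpr ⟨?_, ?_⟩
    · intro h
      have : x = D.b := by rw [← D.f_f x, h, D.f_a]
      rw [this] at h2
      exact absurd h2 (lt_irrefl _)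
    · rw [leftEnds, Finset.mem_filter]
      refine ⟨Finset.mem_univ _, ?_⟩
      rw [D.f_f]
      exact hlt

lemma b_val : (D.b : ℕ) = (D.a : ℕ) + m + 1 := by
  classical
  have hcard : (Finset.Ioo D.a D.b).card = D.crossFinset.card := by
    apply Finset.card_bij (fun x _ => if x < D.f x then x else D.f x)
    · intro x hx
      rw [Finset.mem_Ioo] at hx
      exact chord_mem_cross D g hx.1 hx.2
    · intro x hx y hy hxy
      rw [Finset.mem_Ioo] at hx hy
      by_cases h1 : x < D.f x <;> by_cases h2 : y < D.f y
      · rwa [if_pos h1, if_pos h2] at hxy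
      · rw [if_pos h1, if_neg h2] at hxy
        -- x = f y, so chord is {x,y} with both interior: contradiction with Xor
        exfalso
        have hcx : x ∈ D.crossFinset := by
          have := chord_mem_cross D g hx.1 hx.2
          rwa [if_pos h1] at this
        have hfx : D.f x = y := by rw [hxy, D.f_f]
        rcases cross_xor hcx with ⟨_, hn⟩ | ⟨_, hn⟩
        · exact hn (by rw [hfx]; exact hy)
        · exact hn hx
      · rw [if_neg h1, if_pos h2] at hxy
        exfalso
        have hcy : y ∈ D.crossFinset := by
          have := chord_mem_cross D g hy.1 hy.2
          rwa [if_pos h2] at this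
        have hfy : D.f y = x := by rw [← hxy, D.f_f]
        rcases cross_xor hcy with ⟨_, hn⟩ | ⟨_, hn⟩
        · exact hn (by rw [hfy]; exact hx)
        · exact hn hy
      · rw [if_neg h1, if_neg h2] at hxy
        exact D.f_inj hxy
    · intro c hc
      rcases cross_xor hc with ⟨⟨hc1, hc2⟩, _⟩ | ⟨⟨hc1, hc2⟩, _⟩
      · refine ⟨c, Finset.mem_Ioo.mpr ⟨hc1, hc2⟩, ?_⟩
        rw [if_pos (cross_lt hc)]
      · refine ⟨D.f c, Finset.mem_Ioo.mpr ⟨hc1, hc2⟩, ?_⟩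
        have : ¬ D.f c < D.f (D.f c) := by
          rw [D.f_f]
          exact fun h => absurd ((cross_lt hc).trans h) (lt_irrefl _)
        rw [if_neg this, D.f_f]
  rw [Fin.card_Ioo, card_cross D g] at hcard
  have := D.a_lt_b
  rw [Fin.lt_def] at this
  omega

lemma a_le_m : (D.a : ℕ) ≤ m := by
  have h1 := b_val D g
  have h2 := D.b.2
  omega

end Small

section PsiSec

variable {m : ℕ} (D : MarkedDiagram (m+1)) (g : Fin m ↪ {c : Fin (2*(m+1)) // c ∈ D.crossFinset})

open MarkedDiagram

def gv (i : Fin m) : Fin (2*(m+1)) := ((g i : {c // c ∈ D.crossFinset}) : Fin (2*(m+1)))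

lemma gv_mem (i : Fin m) : gv D g i ∈ D.crossFinset := (g i).2

lemma gv_inj : Function.Injective (gv D g) :=
  fun i j h => g.injective (Subtype.ext h)

lemma exists_gv {c : Fin (2*(m+1))} (hc : c ∈ D.crossFinset) : ∃ i, gv D g i = c :=
  exists_g D g hc

def XInt (i : Fin m) : Fin (2*(m+1)) :=
  if D.a < gv D g i ∧ gv D g i < D.b then gv D g i else D.f (gv D g i)

def XExt (i : Fin m) : Fin (2*(m+1)) :=
  if D.a < gv D g i ∧ gv D g i < D.b then D.f (gv D g i) else gv D g i

lemma XExt_eq_f (i : Fin m) : XExt D g i = D.f (XInt D g i) := by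
  rw [XInt, XExt]
  split
  · rfl
  · exact (D.f_f _).symm

lemma XInt_eq_f (i : Fin m) : XInt D g i = D.f (XExt D g i) := by
  rw [XExt_eq_f, D.f_f]

lemma XInt_in (i : Fin m) : (D.a:ℕ) < (XInt D g i:ℕ) ∧ (XInt D g i:ℕ) < (D.b:ℕ) := by
  rw [XInt]
  split
  · next h => rw [Fin.lt_def, Fin.lt_def] at h; exact h
  · next h =>
    rcases cross_xor (gv_mem D g i) with ⟨hp, _⟩ | ⟨hq, _⟩
    · exact absurd hp h
    · rw [Fin.lt_def, Fin.lt_def] at hq; exact hq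

lemma XExt_out (i : Fin m) : (XExt D g i:ℕ) < (D.a:ℕ) ∨ (D.b:ℕ) < (XExt D g i:ℕ) := by
  have hm := gv_mem D g i
  rw [XExt]
  split
  · next h =>
    have hne1 : (D.f (gv D g i) : ℕ) ≠ (D.a:ℕ) :=
      fun hh => cross_f_ne_a hm (Fin.ext hh)
    have hne2 : (D.f (gv D g i) : ℕ) ≠ (D.b:ℕ) :=
      fun hh => cross_f_ne_b hm (Fin.ext hh)
    rcases cross_xor hm with ⟨_, hn⟩ | ⟨hq, _⟩
    · rw [Fin.lt_def, Fin.lt_def] at hn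
      omega
    · exact absurd h (fun hh => (cross_xor hm).elim (fun t => t.2 hq) (fun t => t.2 hh))
  · next h =>
    have hne1 : ((gv D g i) : ℕ) ≠ (D.a:ℕ) := fun hh => cross_ne_a hm (Fin.ext hh)
    have hne2 : ((gv D g i) : ℕ) ≠ (D.b:ℕ) := fun hh => cross_ne_b hm (Fin.ext hh)
    rw [Fin.lt_def, Fin.lt_def] at h
    omega

lemma gv_eq (i : Fin m) :
    gv D g i = if (XExt D g i:ℕ) < (D.a:ℕ) then XExt D g i else XInt D g i := by
  have hlt := cross_lt (gv_mem D g i)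
  rw [Fin.lt_def] at hlt
  rw [XInt, XExt]
  by_cases h : D.a < gv D g i ∧ gv D g i < D.b
  · rw [if_pos h, if_pos h]
    have ha := h.1
    rw [Fin.lt_def] at ha
    rw [if_neg (by omega)]
  · rw [if_neg h, if_neg h]
    have houtc : ((gv D g i):ℕ) < (D.a:ℕ) := by
      rcases cross_xor (gv_mem D g i) with ⟨hp, _⟩ | ⟨hq, _⟩
      · exact absurd hp h
      · have hne1 : ((gv D g i) : ℕ) ≠ (D.a:ℕ) :=
          fun hh => cross_ne_a (gv_mem D g i) (Fin.ext hh)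
        have hb := hq.2
        rw [Fin.lt_def] at hb
        rw [not_and_or] at h
        rcases h with h | h
        · rw [Fin.lt_def] at h; omega
        · rw [Fin.lt_def] at h; omega
    rw [if_pos houtc]

def PsiA : Fin (m+1) := ⟨(D.a:ℕ), by have := a_le_m D g; omega⟩

lemma PsiA_val : ((PsiA D g : Fin (m+1)) : ℕ) = (D.a : ℕ) := rfl

def PsiSf (i : Fin m) : Fin m :=
  ⟨(XInt D g i:ℕ) - (D.a:ℕ) - 1, by
    have h := XInt_in D g i
    have hb := b_val D g
    omega⟩

def PsiTf (i : Fin m) : Fin m :=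
  ⟨if (XExt D g i:ℕ) < (D.a:ℕ) then (XExt D g i:ℕ) else (XExt D g i:ℕ) - (m+2), by
    have h := XExt_out D g i
    have hb := b_val D g
    have h2 := (XExt D g i).2
    have h3 := a_le_m D g
    split <;> omega⟩

lemma PsiSf_val (i : Fin m) : ((PsiSf D g i : Fin m) : ℕ) = (XInt D g i:ℕ) - (D.a:ℕ) - 1 := rfl

lemma PsiTf_val (i : Fin m) : ((PsiTf D g i : Fin m) : ℕ) =
    if (XExt D g i:ℕ) < (D.a:ℕ) then (XExt D g i:ℕ) else (XExt D g i:ℕ) - (m+2) := rfl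

lemma f_gv_ne (i j : Fin m) : D.f (gv D g i) ≠ gv D g j := by
  intro h
  have h1 : gv D g i < gv D g j := by
    have := cross_lt (gv_mem D g i)
    rwa [h] at this
  have h2 : gv D g j < gv D g i := by
    have := cross_lt (gv_mem D g j)
    rw [← h, D.f_f] at this
    rwa [h] at this
  exact absurd (h1.trans h2) (lt_irrefl _)

lemma XInt_inj : Function.Injective (XInt D g) := by
  intro i j h
  rw [XInt, XInt] at h
  split_ifs at h with h1 h2 h2
  · exact gv_inj D g h
  · exact absurd h.symm (f_gv_ne D g j i)
  · exact absurd h (f_gv_ne D g i j)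
  · exact gv_inj D g (D.f_inj h)

lemma XExt_inj : Function.Injective (XExt D g) := by
  intro i j h
  apply XInt_inj D g
  rw [XInt_eq_f, XInt_eq_f, h]

lemma PsiSf_inj : Function.Injective (PsiSf D g) := by
  intro i j h
  have hv := congrArg Fin.val h
  rw [PsiSf_val, PsiSf_val] at hv
  have h1 := XInt_in D g i
  have h2 := XInt_in D g j
  exact XInt_inj D g (Fin.ext (by omega))

lemma PsiTf_inj : Function.Injective (PsiTf D g) := by
  intro i j h
  have hv := congrArg Fin.val h
  rw [PsiTf_val, PsiTf_val] at hv
  have hb := b_val D g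
  apply XExt_inj D g
  apply Fin.ext
  rcases XExt_out D g i with ho1 | ho1 <;> rcases XExt_out D g j with ho2 | ho2 <;>
    [skip; skip; skip; skip] <;>
  · rw [show (if (XExt D g i:ℕ) < (D.a:ℕ) then (XExt D g i:ℕ) else (XExt D g i:ℕ) - (m+2)) =
        _ from rfl] at hv
    split_ifs at hv <;> omega

noncomputable def PsiS : Equiv.Perm (Fin m) :=
  Equiv.ofBijective _ (Finite.injective_iff_bijective.mp (PsiSf_inj D g))

noncomputable def PsiT : Equiv.Perm (Fin m) :=
  Equiv.ofBijective _ (Finite.injective_iff_bijective.mp (PsiTf_inj D g))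

lemma PsiS_apply (i : Fin m) : PsiS D g i = PsiSf D g i := rfl
lemma PsiT_apply (i : Fin m) : PsiT D g i = PsiTf D g i := rfl

lemma intF_PsiSf (i : Fin m) : intF (PsiA D g) (PsiSf D g i) = XInt D g i := by
  apply Fin.ext
  rw [intF_val, PsiA_val, PsiSf_val]
  have := XInt_in D g i
  omega

lemma extF_PsiTf (i : Fin m) : extF (PsiA D g) (PsiTf D g i) = XExt D g i := by
  apply Fin.ext
  have hb := b_val D g
  rcases XExt_out D g i with ho | ho
  · have hq : ((PsiTf D g i : Fin m):ℕ) = (XExt D g i:ℕ) := by rw [PsiTf_val, if_pos ho]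
    rw [extF_val_lt _ (by rw [hq, PsiA_val]; exact ho), hq]
  · have hq : ((PsiTf D g i : Fin m):ℕ) = (XExt D g i:ℕ) - (m+2) := by
      rw [PsiTf_val, if_neg (by omega)]
    rw [extF_val_ge _ (by rw [hq, PsiA_val]; omega), hq]
    omega

lemma exists_XInt {x : Fin (2*(m+1))} (h1 : D.a < x) (h2 : x < D.b) :
    ∃ i, XInt D g i = x := by
  have hc := chord_mem_cross D g h1 h2
  by_cases hx : x < D.f x
  · rw [if_pos hx] at hc
    obtain ⟨i, hi⟩ := exists_gv D g hc
    refine ⟨i, ?_⟩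
    rw [XInt, hi, if_pos ⟨h1, h2⟩]
  · rw [if_neg hx] at hc
    obtain ⟨i, hi⟩ := exists_gv D g hc
    refine ⟨i, ?_⟩
    rw [XInt, hi]
    have hnot : ¬ (D.a < D.f x ∧ D.f x < D.b) := by
      rcases cross_xor hc with ⟨hp, hn⟩ | ⟨hq, hn⟩
      · exact absurd (by rw [D.f_f]; exact ⟨h1, h2⟩) hn
      · exact hn
    rw [if_neg hnot, D.f_f]

lemma exists_XExt {x : Fin (2*(m+1))} (hna : x ≠ D.a) (hnb : x ≠ D.b)
    (hout : ¬ (D.a < x ∧ x < D.b)) : ∃ i, XExt D g i = x := by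
  have hfin : D.a < D.f x ∧ D.f x < D.b := by
    have hc : (if x < D.f x then x else D.f x) ∈ D.crossFinset := by
      rw [cross_eq_erase D g]
      by_cases hx : x < D.f x
      · rw [if_pos hx]
        refine Finset.mem_erase.mpr ⟨hna, ?_⟩
        rw [leftEnds, Finset.mem_filter]
        exact ⟨Finset.mem_univ _, hx⟩
      · rw [if_neg hx]
        have hlt : D.f x < x := by
          rcases lt_trichotomy x (D.f x) with h | h | h
          · exact absurd h hx
          · exact absurd h.symm (D.f_ne x)
          · exact h
        refine Finset.mem_erase.mpr ⟨?_, ?_⟩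
        · intro hh
          exact hnb (by rw [← D.f_f x, hh, D.f_a])
        · rw [leftEnds, Finset.mem_filter]
          refine ⟨Finset.mem_univ _, ?_⟩
          rw [D.f_f]
          exact hlt
    by_cases hx : x < D.f x
    · rw [if_pos hx] at hc
      rcases cross_xor hc with ⟨hp, _⟩ | ⟨hq, _⟩
      · exact absurd hp hout
      · exact hq
    · rw [if_neg hx] at hc
      rcases cross_xor hc with ⟨hp, _⟩ | ⟨hq, _⟩
      · exact hp
      · rw [D.f_f] at hq
        exact absurd hq hout
  obtain ⟨i, hi⟩ := exists_XInt D g hfin.1 hfin.2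
  refine ⟨i, ?_⟩
  rw [XExt_eq_f, hi, D.f_f]

end PsiSec

section RoundTrips

variable {m : ℕ}

lemma pattF_mid (a' : Fin (m+1)) (σ τ : Equiv.Perm (Fin m)) (x : Fin (2*(m+1))) (p : Fin m)
    (hp : (x:ℕ) = (a':ℕ)+1+(p:ℕ)) : pattF a' σ τ x = extF a' (τ (σ.symm p)) := by
  have hx : x = intF a' p := Fin.ext (by rw [intF_val]; exact hp)
  rw [hx, pattF_int]

lemma pattF_out (a' : Fin (m+1)) (σ τ : Equiv.Perm (Fin m)) (x : Fin (2*(m+1))) (q : Fin m)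
    (hq : (x:ℕ) = ((extF a' q : Fin (2*(m+1))):ℕ)) : pattF a' σ τ x = intF a' (σ (τ.symm q)) := by
  have hx : x = extF a' q := Fin.ext hq
  rw [hx, pattF_ext]

variable (D : MarkedDiagram (m+1)) (g : Fin m ↪ {c : Fin (2*(m+1)) // c ∈ D.crossFinset})

open MarkedDiagram

lemma PhiPsi_f : pattF (PsiA D g) (PsiS D g) (PsiT D g) = D.f := by
  funext x
  have hb := b_val D g
  by_cases hx1 : (x:ℕ) = (D.a:ℕ)
  · have hxa : x = D.a := Fin.ext hx1
    apply Fin.ext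
    rw [pattF_a _ _ _ x hx1, hxa, D.f_a, PsiA_val]
    omega
  · by_cases hx2 : (x:ℕ) = (D.a:ℕ)+m+1
    · have hxb : x = D.b := Fin.ext (by omega)
      apply Fin.ext
      rw [pattF_b _ _ _ x hx2, hxb, D.f_b, PsiA_val]
    · by_cases hx3 : (D.a:ℕ) < (x:ℕ) ∧ (x:ℕ) < (D.a:ℕ)+m+1
      · -- interior point
        have hin1 : D.a < x := by rw [Fin.lt_def]; exact hx3.1
        have hin2 : x < D.b := by rw [Fin.lt_def]; omega
        obtain ⟨i, hi⟩ := exists_XInt D g hin1 hin2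
        have hval := congrArg Fin.val hi
        have hIn := XInt_in D g i
        rw [pattF_mid (PsiA D g) _ _ x (PsiSf D g i)
          (by rw [PsiA_val, PsiSf_val]; omega)]
        rw [show (PsiS D g).symm (PsiSf D g i) = i from (PsiS D g).symm_apply_apply i]
        rw [PsiT_apply, extF_PsiTf, XExt_eq_f, hi]
      · -- exterior point
        have hxna : x ≠ D.a := fun h => hx1 (congrArg Fin.val h)
        have hxnb : x ≠ D.b := fun h => hx2 (by have := congrArg Fin.val h; omega)
        have hout : ¬ (D.a < x ∧ x < D.b) := by
          rw [Fin.lt_def, Fin.lt_def]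
          omega
        obtain ⟨i, hi⟩ := exists_XExt D g hxna hxnb hout
        have hval := congrArg Fin.val hi
        rw [pattF_out (PsiA D g) _ _ x (PsiTf D g i)
          (by rw [extF_PsiTf]; omega)]
        rw [show (PsiT D g).symm (PsiTf D g i) = i from (PsiT D g).symm_apply_apply i]
        rw [PsiS_apply, intF_PsiSf, XInt_eq_f, hi]

lemma PhiPsi_g (i : Fin m) : PhiG (PsiA D g) (PsiS D g) (PsiT D g) i = gv D g i := by
  rw [PhiG, PsiT_apply, PsiS_apply, gv_eq D g i]
  have hb := b_val D g
  by_cases h : (XExt D g i:ℕ) < (D.a:ℕ)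
  · rw [if_pos (by rw [PsiTf_val, if_pos h, PsiA_val]; exact h), if_pos h, extF_PsiTf]
  · rw [if_neg ?_, if_neg h, intF_PsiSf]
    rw [PsiTf_val, if_neg h, PsiA_val]
    rcases XExt_out D g i with ho | ho
    · omega
    · omega

lemma fullext {n m : ℕ} {x y : FullType n m} (h1 : x.1 = y.1)
    (h2 : ∀ i, ((x.2 i : _) : Fin (2*n)) = ((y.2 i : _) : Fin (2*n))) : x = y := by
  obtain ⟨D, g⟩ := x
  obtain ⟨D', g'⟩ := y
  dsimp only at h1
  subst h1
  exact congrArg _ (DFunLike.ext g g' (fun i => Subtype.ext (h2 i)))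

noncomputable def Psi : FullType (m+1) m →
    Fin (m+1) × Equiv.Perm (Fin m) × Equiv.Perm (Fin m) :=
  fun x => ⟨PsiA x.1 x.2, PsiS x.1 x.2, PsiT x.1 x.2⟩

lemma PhiPsi (x : FullType (m+1) m) : Phi (Psi x) = x := by
  obtain ⟨D, g⟩ := x
  apply fullext
  · -- diagrams agree
    apply Subtype.ext
    apply Prod.ext
    · exact PhiPsi_f D g
    · apply Fin.ext
      rfl
  · intro i
    exact PhiPsi_g D g i

-- the Φ-side diagram and embedding
lemma XInt_Phi (a' : Fin (m+1)) (σ τ : Equiv.Perm (Fin m)) (i : Fin m) :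
    XInt (Phi (a', σ, τ)).1 (Phi (a', σ, τ)).2 i = intF a' (σ i) ∧
      XExt (Phi (a', σ, τ)).1 (Phi (a', σ, τ)).2 i = extF a' (τ i) := by
  have hgv : gv (Phi (a', σ, τ)).1 (Phi (a', σ, τ)).2 i = PhiG a' σ τ i := rfl
  have hf : (Phi (a', σ, τ)).1.f = pattF a' σ τ := rfl
  have hav : ((Phi (a', σ, τ)).1.a : ℕ) = (a' : ℕ) := rfl
  have hbv : ((Phi (a', σ, τ)).1.b : ℕ) = (a' : ℕ) + m + 1 := PhiD_b a' σ τ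
  by_cases hτ : ((τ i : ℕ)) < (a':ℕ)
  · have hPhiG : PhiG a' σ τ i = extF a' (τ i) := by rw [PhiG, if_pos hτ]
    have hvext := extF_val_lt a' hτ
    have hcond : ¬ ((Phi (a', σ, τ)).1.a < gv (Phi (a', σ, τ)).1 (Phi (a', σ, τ)).2 i ∧
        gv (Phi (a', σ, τ)).1 (Phi (a', σ, τ)).2 i < (Phi (a', σ, τ)).1.b) := by
      rw [hgv, hPhiG]
      intro hcc
      have := hcc.1
      rw [Fin.lt_def, hav] at this
      omega
    have hfgv : (Phi (a', σ, τ)).1.f (gv (Phi (a', σ, τ)).1 (Phi (a', σ, τ)).2 i) =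
        intF a' (σ i) := by
      rw [hgv, hPhiG, hf, pattF_ext, Equiv.symm_apply_apply]
    constructor
    · rw [XInt, if_neg hcond, hfgv]
    · rw [XExt, if_neg hcond, hgv, hPhiG]
  · have hPhiG : PhiG a' σ τ i = intF a' (σ i) := by rw [PhiG, if_neg hτ]
    have hvint := intF_lt a' (σ i)
    have hcond : ((Phi (a', σ, τ)).1.a < gv (Phi (a', σ, τ)).1 (Phi (a', σ, τ)).2 i ∧
        gv (Phi (a', σ, τ)).1 (Phi (a', σ, τ)).2 i < (Phi (a', σ, τ)).1.b) := by
      rw [hgv, hPhiG]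
      constructor
      · rw [Fin.lt_def, hav]; exact hvint.1
      · rw [Fin.lt_def, hbv]; exact hvint.2
    have hfgv : (Phi (a', σ, τ)).1.f (gv (Phi (a', σ, τ)).1 (Phi (a', σ, τ)).2 i) =
        extF a' (τ i) := by
      rw [hgv, hPhiG, hf, pattF_int, Equiv.symm_apply_apply]
    constructor
    · rw [XInt, if_pos hcond, hgv, hPhiG]
    · rw [XExt, if_pos hcond, hfgv]

lemma PsiPhi (p : Fin (m+1) × Equiv.Perm (Fin m) × Equiv.Perm (Fin m)) :
    Psi (Phi p) = p := by
  obtain ⟨a', σ, τ⟩ := p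
  have hX := XInt_Phi a' σ τ
  refine Prod.ext ?_ (Prod.ext ?_ ?_)
  · apply Fin.ext
    rfl
  · apply Equiv.ext
    intro i
    show PsiSf _ _ i = σ i
    apply Fin.ext
    rw [PsiSf_val, (hX i).1]
    have hav : (((Phi (a', σ, τ)).1.a : Fin (2*(m+1))) : ℕ) = (a' : ℕ) := rfl
    rw [hav, intF_val]
    omega
  · apply Equiv.ext
    intro i
    show PsiTf _ _ i = τ i
    apply Fin.ext
    rw [PsiTf_val, (hX i).2]
    have hav : (((Phi (a', σ, τ)).1.a : Fin (2*(m+1))) : ℕ) = (a' : ℕ) := rfl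
    rw [hav]
    by_cases hτ : ((τ i : ℕ)) < (a':ℕ)
    · rw [extF_val_lt a' hτ, if_pos hτ]
    · rw [extF_val_ge a' hτ, if_neg (by omega)]
      omega

theorem card_fullType_small (m : ℕ) :
    Fintype.card (FullType (m+1) m) = (m+1) * (m.factorial * m.factorial) := by
  have hbij : Function.Bijective (Phi (m := m)) :=
    ⟨fun p q h => by rw [← PsiPhi p, ← PsiPhi q, h],
     fun x => ⟨Psi x, PhiPsi x⟩⟩
  rw [← Fintype.card_of_bijective hbij]
  rw [Fintype.card_prod, Fintype.card_prod, Fintype.card_perm, Fintype.card_fin,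
    Fintype.card_fin]

end RoundTrips

namespace MarkedDiagram

variable {n : ℕ} {D : MarkedDiagram n} {c c' : Fin (2*n)}

lemma cross_f_ne_cross (hc : c ∈ D.crossFinset) (hc' : c' ∈ D.crossFinset) :
    D.f c ≠ c' := by
  intro h
  have h1 := cross_lt hc
  have h2 := cross_lt hc'
  have h3 : D.f c' = c := by rw [← h, D.f_f]
  rw [h] at h1
  rw [h3] at h2
  exact absurd (h1.trans h2) (lt_irrefl _)

end MarkedDiagram

section SpecialSet

variable {n m : ℕ}

def specialSet (x : FullType n m) : Finset (Fin (2*n)) :=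
  ({x.1.a, x.1.b} : Finset (Fin (2*n)))
    ∪ Finset.univ.image (fun i => ((x.2 i : _) : Fin (2*n)))
    ∪ Finset.univ.image (fun i => x.1.f ((x.2 i : _) : Fin (2*n)))

open MarkedDiagram

lemma mem_specialSet {x : FullType n m} {y : Fin (2*n)} : y ∈ specialSet x ↔
    y = x.1.a ∨ y = x.1.b ∨ (∃ i, ((x.2 i : _) : Fin (2*n)) = y) ∨
      (∃ i, x.1.f ((x.2 i : _) : Fin (2*n)) = y) := by
  simp only [specialSet, Finset.mem_union, Finset.mem_insert, Finset.mem_singleton,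
    Finset.mem_image, Finset.mem_univ, true_and]
  tauto

lemma specialSet_closed {x : FullType n m} {y : Fin (2*n)} (hy : y ∈ specialSet x) :
    x.1.f y ∈ specialSet x := by
  rw [mem_specialSet] at hy ⊢
  rcases hy with rfl | rfl | ⟨i, rfl⟩ | ⟨i, hi⟩
  · exact Or.inr (Or.inl (x.1.f_a))
  · exact Or.inl (x.1.f_b)
  · exact Or.inr (Or.inr (Or.inr ⟨i, rfl⟩))
  · refine Or.inr (Or.inr (Or.inl ⟨i, ?_⟩))
    rw [← hi, x.1.f_f]

lemma card_specialSet (x : FullType n m) : (specialSet x).card = 2*m+2 := by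
  classical
  have hgvinj : Function.Injective (fun i => ((x.2 i : _) : Fin (2*n))) :=
    fun i j h => x.2.injective (Subtype.ext h)
  have hfgvinj : Function.Injective (fun i => x.1.f ((x.2 i : _) : Fin (2*n))) :=
    fun i j h => x.2.injective (Subtype.ext (x.1.f_inj h))
  have hd1 : Disjoint ({x.1.a, x.1.b} : Finset (Fin (2*n)))
      (Finset.univ.image (fun i => ((x.2 i : _) : Fin (2*n)))) := by
    rw [Finset.disjoint_right]
    intro c hc hc2
    obtain ⟨i, _, rfl⟩ := Finset.mem_image.mp hc
    rcases Finset.mem_insert.mp hc2 with h | h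
    · exact cross_ne_a (x.2 i).2 h
    · exact cross_ne_b (x.2 i).2 (Finset.mem_singleton.mp h)
  have hd2 : Disjoint (({x.1.a, x.1.b} : Finset (Fin (2*n)))
      ∪ Finset.univ.image (fun i => ((x.2 i : _) : Fin (2*n))))
      (Finset.univ.image (fun i => x.1.f ((x.2 i : _) : Fin (2*n)))) := by
    rw [Finset.disjoint_right]
    intro c hc hc2
    obtain ⟨i, _, rfl⟩ := Finset.mem_image.mp hc
    rcases Finset.mem_union.mp hc2 with h | h
    · rcases Finset.mem_insert.mp h with h | h
      · exact cross_f_ne_a (x.2 i).2 h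
      · exact cross_f_ne_b (x.2 i).2 (Finset.mem_singleton.mp h)
    · obtain ⟨j, _, hj⟩ := Finset.mem_image.mp h
      exact cross_f_ne_cross (x.2 i).2 (x.2 j).2 hj.symm
  rw [specialSet, Finset.card_union_of_disjoint hd2, Finset.card_union_of_disjoint hd1]
  rw [Finset.card_image_of_injective _ hgvinj, Finset.card_image_of_injective _ hfgvinj,
    Finset.card_univ, Fintype.card_fin]
  have hab : x.1.a ≠ x.1.b := ne_of_lt x.1.a_lt_b
  rw [Finset.card_pair hab]
  omega

lemma small_cover {m : ℕ} (x : FullType (m+1) m) (y : Fin (2*(m+1))) :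
    y ∈ specialSet x := by
  rw [mem_specialSet]
  rcases lt_trichotomy y (x.1.f y) with h | h | h
  · have hy : y ∈ x.1.leftEnds := by
      rw [leftEnds, Finset.mem_filter]
      exact ⟨Finset.mem_univ _, h⟩
    by_cases ha : y = x.1.a
    · exact Or.inl ha
    · have : y ∈ x.1.crossFinset := by
        rw [cross_eq_erase x.1 x.2]
        exact Finset.mem_erase.mpr ⟨ha, hy⟩
      obtain ⟨i, hi⟩ := exists_g x.1 x.2 this
      exact Or.inr (Or.inr (Or.inl ⟨i, hi⟩))
  · exact absurd h.symm (x.1.f_ne y)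
  · have hy : x.1.f y ∈ x.1.leftEnds := by
      rw [leftEnds, Finset.mem_filter]
      refine ⟨Finset.mem_univ _, ?_⟩
      rw [x.1.f_f]
      exact h
    by_cases ha : x.1.f y = x.1.a
    · refine Or.inr (Or.inl ?_)
      rw [← x.1.f_f y, ha, x.1.f_a]
    · have : x.1.f y ∈ x.1.crossFinset := by
        rw [cross_eq_erase x.1 x.2]
        exact Finset.mem_erase.mpr ⟨ha, hy⟩
      obtain ⟨i, hi⟩ := exists_g x.1 x.2 this
      refine Or.inr (Or.inr (Or.inr ⟨i, ?_⟩))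
      rw [hi, x.1.f_f]

lemma specialSet_small {m : ℕ} (x : FullType (m+1) m) :
    specialSet x = Finset.univ :=
  Finset.eq_univ_iff_forall.mpr (small_cover x)

end SpecialSet

section Transport

variable {m k : ℕ}
variable (T : Finset (Fin (2*(m+1+k)))) (hT : T.card = 2*(m+1)) (hTc : Tᶜ.card = 2*k)

open MarkedDiagram

noncomputable def eT : Fin (2*(m+1)) ≃o {y : Fin (2*(m+1+k)) // y ∈ T} :=
  T.orderIsoOfFin hT

noncomputable def eC : Fin (2*k) ≃o {y : Fin (2*(m+1+k)) // y ∈ Tᶜ} :=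
  Tᶜ.orderIsoOfFin hTc

lemma eT_symm_lt {y1 y2 : Fin (2*(m+1+k))} (h1 : y1 ∈ T) (h2 : y2 ∈ T) :
    (eT T hT).symm ⟨y1, h1⟩ < (eT T hT).symm ⟨y2, h2⟩ ↔ y1 < y2 := by
  rw [OrderIso.lt_iff_lt, Subtype.mk_lt_mk]

lemma eT_coe_lt (u v : Fin (2*(m+1))) :
    (↑(eT T hT u) : Fin (2*(m+1+k))) < ↑(eT T hT v) ↔ u < v := by
  rw [Subtype.coe_lt_coe, OrderIso.lt_iff_lt]

lemma eT_symm_coe (u : Fin (2*(m+1))) (h : (↑(eT T hT u) : Fin (2*(m+1+k))) ∈ T) :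
    (eT T hT).symm ⟨↑(eT T hT u), h⟩ = u := by
  have h2 : (⟨↑(eT T hT u), h⟩ : {y // y ∈ T}) = eT T hT u := Subtype.ext rfl
  rw [h2, OrderIso.symm_apply_apply]

lemma eC_symm_coe (u : Fin (2*k)) (h : (↑(eC T hTc u) : Fin (2*(m+1+k))) ∈ Tᶜ) :
    (eC T hTc).symm ⟨↑(eC T hTc u), h⟩ = u := by
  have h2 : (⟨↑(eC T hTc u), h⟩ : {y // y ∈ Tᶜ}) = eC T hTc u := Subtype.ext rfl
  rw [h2, OrderIso.symm_apply_apply]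

lemma compl_closed (D : MarkedDiagram (m+1+k)) (hcl : ∀ y ∈ T, D.f y ∈ T) :
    ∀ y ∈ Tᶜ, D.f y ∈ Tᶜ := by
  intro y hy
  rw [Finset.mem_compl] at hy ⊢
  intro hf
  exact hy (by rw [← D.f_f y]; exact hcl _ hf)

variable (D : MarkedDiagram (m+1+k)) (hcl : ∀ y ∈ T, D.f y ∈ T)
  (hclc : ∀ y ∈ Tᶜ, D.f y ∈ Tᶜ)

noncomputable def smF : Fin (2*(m+1)) → Fin (2*(m+1)) :=
  fun z => (eT T hT).symm ⟨D.f ↑(eT T hT z), hcl _ (eT T hT z).2⟩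

lemma smF_coe (z : Fin (2*(m+1))) :
    (↑(eT T hT (smF T hT D hcl z)) : Fin (2*(m+1+k))) = D.f ↑(eT T hT z) := by
  rw [smF, OrderIso.apply_symm_apply]

lemma smF_symm {y : Fin (2*(m+1+k))} (h : y ∈ T) :
    smF T hT D hcl ((eT T hT).symm ⟨y, h⟩) = (eT T hT).symm ⟨D.f y, hcl y h⟩ := by
  rw [smF]
  congr 1
  apply Subtype.ext
  show D.f ↑(eT T hT ((eT T hT).symm ⟨y, h⟩)) = D.f y
  rw [OrderIso.apply_symm_apply]

lemma smF_invol (z : Fin (2*(m+1))) :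
    smF T hT D hcl (smF T hT D hcl z) = z := by
  apply (eT T hT).injective
  apply Subtype.ext
  rw [smF_coe, smF_coe, D.f_f]

lemma smF_ne (z : Fin (2*(m+1))) : smF T hT D hcl z ≠ z := by
  intro h
  have h2 := congrArg (fun w => (↑(eT T hT w) : Fin (2*(m+1+k)))) h
  simp only [smF_coe] at h2
  exact D.f_ne _ h2

noncomputable def cmF : Fin (2*k) → Fin (2*k) :=
  fun z => (eC T hTc).symm ⟨D.f ↑(eC T hTc z), hclc _ (eC T hTc z).2⟩

lemma cmF_coe (z : Fin (2*k)) :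
    (↑(eC T hTc (cmF T hTc D hclc z)) : Fin (2*(m+1+k))) = D.f ↑(eC T hTc z) := by
  rw [cmF, OrderIso.apply_symm_apply]

lemma cmF_invol (z : Fin (2*k)) : cmF T hTc D hclc (cmF T hTc D hclc z) = z := by
  apply (eC T hTc).injective
  apply Subtype.ext
  rw [cmF_coe, cmF_coe, D.f_f]

lemma cmF_ne (z : Fin (2*k)) : cmF T hTc D hclc z ≠ z := by
  intro h
  have h2 := congrArg (fun w => (↑(eC T hTc w) : Fin (2*(m+1+k)))) h
  simp only [cmF_coe] at h2
  exact D.f_ne _ h2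

end Transport

section Transport2

variable {m k : ℕ}
variable (T : Finset (Fin (2*(m+1+k)))) (hT : T.card = 2*(m+1)) (hTc : Tᶜ.card = 2*k)

open MarkedDiagram

lemma closed_of_hx (x : FullType (m+1+k) m) (hx : specialSet x = T) :
    ∀ y ∈ T, x.1.f y ∈ T := by
  intro y hy
  rw [← hx] at hy ⊢
  exact specialSet_closed hy

lemma a_mem_of_hx (x : FullType (m+1+k) m) (hx : specialSet x = T) : x.1.a ∈ T := by
  rw [← hx]; exact mem_specialSet.mpr (Or.inl rfl)

lemma gv_mem_of_hx (x : FullType (m+1+k) m) (hx : specialSet x = T) (i : Fin m) :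
    ((x.2 i : _) : Fin (2*(m+1+k))) ∈ T := by
  rw [← hx]; exact mem_specialSet.mpr (Or.inr (Or.inr (Or.inl ⟨i, rfl⟩)))

noncomputable def FwD (x : FullType (m+1+k) m) (hx : specialSet x = T) :
    MarkedDiagram (m+1) :=
  ⟨⟨smF T hT x.1 (closed_of_hx T x hx),
    (eT T hT).symm ⟨x.1.a, a_mem_of_hx T x hx⟩⟩,
    fun z => smF_invol T hT x.1 (closed_of_hx T x hx) z,
    fun z => smF_ne T hT x.1 (closed_of_hx T x hx) z,
    by
      dsimp only
      rw [smF_symm]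
      rw [eT_symm_lt]
      exact x.1.a_lt_b⟩

lemma FwD_f (x : FullType (m+1+k) m) (hx : specialSet x = T) :
    (FwD T hT x hx).f = smF T hT x.1 (closed_of_hx T x hx) := rfl

lemma FwD_a (x : FullType (m+1+k) m) (hx : specialSet x = T) :
    (FwD T hT x hx).a = (eT T hT).symm ⟨x.1.a, a_mem_of_hx T x hx⟩ := rfl

lemma FwD_b (x : FullType (m+1+k) m) (hx : specialSet x = T) :
    (FwD T hT x hx).b = (eT T hT).symm ⟨x.1.b, closed_of_hx T x hx _ (a_mem_of_hx T x hx)⟩ := by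
  show smF T hT x.1 (closed_of_hx T x hx) ((eT T hT).symm ⟨x.1.a, a_mem_of_hx T x hx⟩) = _
  rw [smF_symm]
  rfl

noncomputable def FwG (x : FullType (m+1+k) m) (hx : specialSet x = T) (i : Fin m) :
    Fin (2*(m+1)) :=
  (eT T hT).symm ⟨((x.2 i : _) : Fin (2*(m+1+k))), gv_mem_of_hx T x hx i⟩

lemma FwG_mem (x : FullType (m+1+k) m) (hx : specialSet x = T) (i : Fin m) :
    FwG T hT x hx i ∈ (FwD T hT x hx).crossFinset := by
  rw [mem_cross_iff]
  rw [FwG, FwD_f, FwD_a, FwD_b T hT x hx, smF_symm]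
  simp only [eT_symm_lt]
  have h := (mem_cross_iff x.1).mp (x.2 i).2
  refine ⟨h.1, ?_⟩
  rcases h.2 with ⟨⟨h1, h2⟩, h3⟩ | ⟨⟨h1, h2⟩, h3⟩
  · exact Or.inl ⟨⟨h1, (eT_symm_lt T hT _ _).mpr h2⟩,
      fun hh => h3 ⟨hh.1, (eT_symm_lt T hT _ _).mp hh.2⟩⟩
  · exact Or.inr ⟨⟨h1, (eT_symm_lt T hT _ _).mpr h2⟩,
      fun hh => h3 ⟨hh.1, (eT_symm_lt T hT _ _).mp hh.2⟩⟩

noncomputable def Fw (x : FullType (m+1+k) m) (hx : specialSet x = T) :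
    FullType (m+1) m × FpfInv (Fin (2*k)) :=
  (⟨FwD T hT x hx,
    ⟨fun i => ⟨FwG T hT x hx i, FwG_mem T hT x hx i⟩,
      by
        intro i j h
        have h2 := congrArg (fun w => (↑(eT T hT (w : _).1) : Fin (2*(m+1+k)))) h
        simp only [FwG, OrderIso.apply_symm_apply] at h2
        exact x.2.injective (Subtype.ext h2)⟩⟩,
   ⟨cmF T hTc x.1 (compl_closed T x.1 (closed_of_hx T x hx)),
    fun z => cmF_invol T hTc x.1 _ z,
    fun z => cmF_ne T hTc x.1 _ z⟩)

-- backward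
noncomputable def bigF (E : FullType (m+1) m) (H : FpfInv (Fin (2*k))) :
    Fin (2*(m+1+k)) → Fin (2*(m+1+k)) :=
  fun w =>
    if hw : w ∈ T then ↑(eT T hT (E.1.f ((eT T hT).symm ⟨w, hw⟩)))
    else ↑(eC T hTc (H.1 ((eC T hTc).symm ⟨w, Finset.mem_compl.mpr hw⟩)))

variable (E : FullType (m+1) m) (H : FpfInv (Fin (2*k)))

lemma bigF_coeT (u : Fin (2*(m+1))) :
    bigF T hT hTc E H ↑(eT T hT u) = ↑(eT T hT (E.1.f u)) := by
  rw [bigF, dif_pos (eT T hT u).2, eT_symm_coe]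

lemma bigF_coeC (u : Fin (2*k)) :
    bigF T hT hTc E H ↑(eC T hTc u) = ↑(eC T hTc (H.1 u)) := by
  rw [bigF, dif_neg (Finset.mem_compl.mp (eC T hTc u).2), eC_symm_coe]

lemma coe_eT_symm {w : Fin (2*(m+1+k))} (hw : w ∈ T) :
    (↑(eT T hT ((eT T hT).symm ⟨w, hw⟩)) : Fin (2*(m+1+k))) = w :=
  congrArg Subtype.val ((eT T hT).apply_symm_apply ⟨w, hw⟩)

lemma coe_eC_symm {w : Fin (2*(m+1+k))} (hw : w ∈ Tᶜ) :
    (↑(eC T hTc ((eC T hTc).symm ⟨w, hw⟩)) : Fin (2*(m+1+k))) = w :=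
  congrArg Subtype.val ((eC T hTc).apply_symm_apply ⟨w, hw⟩)

lemma bigF_invol (w : Fin (2*(m+1+k))) :
    bigF T hT hTc E H (bigF T hT hTc E H w) = w := by
  by_cases hw : w ∈ T
  · rw [← coe_eT_symm T hT hw, bigF_coeT, bigF_coeT, E.1.f_f]
  · rw [← coe_eC_symm T hTc (Finset.mem_compl.mpr hw), bigF_coeC, bigF_coeC, H.2.1]

lemma bigF_ne (w : Fin (2*(m+1+k))) : bigF T hT hTc E H w ≠ w := by
  by_cases hw : w ∈ T
  · rw [← coe_eT_symm T hT hw, bigF_coeT]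
    intro h
    exact E.1.f_ne _ ((eT T hT).injective (Subtype.ext h))
  · rw [← coe_eC_symm T hTc (Finset.mem_compl.mpr hw), bigF_coeC]
    intro h
    exact H.2.2 _ ((eC T hTc).injective (Subtype.ext h))

noncomputable def BwD : MarkedDiagram (m+1+k) :=
  ⟨⟨bigF T hT hTc E H, ↑(eT T hT E.1.a)⟩,
    fun w => bigF_invol T hT hTc E H w,
    fun w => bigF_ne T hT hTc E H w,
    by
      show _ < bigF T hT hTc E H _
      rw [bigF_coeT, Subtype.coe_lt_coe, OrderIso.lt_iff_lt]
      exact E.1.a_lt_b⟩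

lemma BwD_f : (BwD T hT hTc E H).f = bigF T hT hTc E H := rfl
lemma BwD_a : (BwD T hT hTc E H).a = ↑(eT T hT E.1.a) := rfl
lemma BwD_b : (BwD T hT hTc E H).b = ↑(eT T hT E.1.b) := by
  show bigF T hT hTc E H ↑(eT T hT E.1.a) = _
  rw [bigF_coeT]
  rfl

lemma BwG_mem (i : Fin m) :
    (↑(eT T hT ((E.2 i : _) : Fin (2*(m+1)))) : Fin (2*(m+1+k)))
      ∈ (BwD T hT hTc E H).crossFinset := by
  rw [mem_cross_iff, BwD_f, BwD_a, BwD_b, bigF_coeT]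
  simp only [Subtype.coe_lt_coe, OrderIso.lt_iff_lt]
  exact (mem_cross_iff E.1).mp (E.2 i).2

noncomputable def Bw : FullType (m+1+k) m :=
  ⟨BwD T hT hTc E H,
    ⟨fun i => ⟨↑(eT T hT ((E.2 i : _) : Fin (2*(m+1)))), BwG_mem T hT hTc E H i⟩,
      by
        intro i j h
        rw [Subtype.mk.injEq] at h
        exact E.2.injective (Subtype.ext ((eT T hT).injective (Subtype.ext h)))⟩⟩

lemma specialSet_Bw : specialSet (Bw T hT hTc E H) = T := by
  ext w
  rw [mem_specialSet]
  constructor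
  · rintro (rfl | rfl | ⟨i, rfl⟩ | ⟨i, rfl⟩)
    · exact (eT T hT E.1.a).2
    · show (BwD T hT hTc E H).b ∈ T
      rw [BwD_b]
      exact (eT T hT E.1.b).2
    · exact (eT T hT _).2
    · show (BwD T hT hTc E H).f _ ∈ T
      rw [BwD_f]
      show bigF T hT hTc E H ↑(eT T hT _) ∈ T
      rw [bigF_coeT]
      exact (eT T hT _).2
  · intro hw
    rcases mem_specialSet.mp (small_cover E ((eT T hT).symm ⟨w, hw⟩)) with
      h | h | ⟨i, hi⟩ | ⟨i, hi⟩
    · left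
      show w = (BwD T hT hTc E H).a
      rw [BwD_a, ← h, coe_eT_symm]
    · right; left
      show w = (BwD T hT hTc E H).b
      rw [BwD_b, ← h, coe_eT_symm]
    · right; right; left
      exact ⟨i, by rw [show ((Bw T hT hTc E H).2 i : Fin (2*(m+1+k))) =
        ↑(eT T hT ((E.2 i : _) : Fin (2*(m+1)))) from rfl, hi, coe_eT_symm]⟩
    · right; right; right
      refine ⟨i, ?_⟩
      show bigF T hT hTc E H ↑(eT T hT _) = w
      rw [bigF_coeT, hi, coe_eT_symm]

end Transport2

section Transport3

variable {m k : ℕ}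
variable (T : Finset (Fin (2*(m+1+k)))) (hT : T.card = 2*(m+1)) (hTc : Tᶜ.card = 2*k)

open MarkedDiagram

noncomputable def FwFull (x : FullType (m+1+k) m) (hx : specialSet x = T) :
    FullType (m+1) m :=
  ⟨FwD T hT x hx,
    ⟨fun i => ⟨FwG T hT x hx i, FwG_mem T hT x hx i⟩,
      by
        intro i j h
        rw [Subtype.mk.injEq] at h
        have h2 := congrArg (fun w => (↑(eT T hT w) : Fin (2*(m+1+k)))) h
        simp only [FwG, OrderIso.apply_symm_apply] at h2
        exact x.2.injective (Subtype.ext h2)⟩⟩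

noncomputable def FwInv (x : FullType (m+1+k) m) (hx : specialSet x = T) :
    FpfInv (Fin (2*k)) :=
  ⟨cmF T hTc x.1 (compl_closed T x.1 (closed_of_hx T x hx)),
    fun z => cmF_invol T hTc x.1 (compl_closed T x.1 (closed_of_hx T x hx)) z,
    fun z => cmF_ne T hTc x.1 (compl_closed T x.1 (closed_of_hx T x hx)) z⟩

variable (E : FullType (m+1) m) (H : FpfInv (Fin (2*k)))

include hT hTc

lemma FwFull_Bw :
    FwFull T hT (Bw T hT hTc E H) (specialSet_Bw T hT hTc E H) = E := by
  apply fullext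
  · apply Subtype.ext
    apply Prod.ext
    · funext z
      show smF T hT (Bw T hT hTc E H).1
        (closed_of_hx T (Bw T hT hTc E H) (specialSet_Bw T hT hTc E H)) z = E.1.f z
      apply (eT T hT).injective
      apply Subtype.ext
      rw [smF_coe]
      show bigF T hT hTc E H ↑(eT T hT z) = ↑(eT T hT (E.1.f z))
      rw [bigF_coeT]
    · show (FwD T hT (Bw T hT hTc E H) (specialSet_Bw T hT hTc E H)).a = E.1.a
      rw [FwD_a]
      exact eT_symm_coe T hT E.1.a _
  · intro i
    show (eT T hT).symm ⟨↑(eT T hT ((E.2 i : _) : Fin (2*(m+1)))),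
        gv_mem_of_hx T (Bw T hT hTc E H) (specialSet_Bw T hT hTc E H) i⟩ =
      ((E.2 i : _) : Fin (2*(m+1)))
    exact eT_symm_coe T hT _ _

lemma FwInv_Bw :
    FwInv T hTc (Bw T hT hTc E H) (specialSet_Bw T hT hTc E H) = H := by
  apply Subtype.ext
  funext z
  show cmF T hTc (Bw T hT hTc E H).1
    (compl_closed T (Bw T hT hTc E H).1
      (closed_of_hx T (Bw T hT hTc E H) (specialSet_Bw T hT hTc E H))) z = H.1 z
  apply (eC T hTc).injective
  apply Subtype.ext
  rw [cmF_coe]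
  show bigF T hT hTc E H ↑(eC T hTc z) = ↑(eC T hTc (H.1 z))
  rw [bigF_coeC]

lemma Bw_Fw (x : FullType (m+1+k) m) (hx : specialSet x = T) :
    Bw T hT hTc (FwFull T hT x hx) (FwInv T hTc x hx) = x := by
  apply fullext
  · apply Subtype.ext
    apply Prod.ext
    · funext w
      show bigF T hT hTc (FwFull T hT x hx) (FwInv T hTc x hx) w = x.1.f w
      by_cases hw : w ∈ T
      · rw [← coe_eT_symm T hT hw, bigF_coeT]
        show (↑(eT T hT (smF T hT x.1 (closed_of_hx T x hx)
          ((eT T hT).symm ⟨w, hw⟩))) : Fin (2*(m+1+k))) =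
          x.1.f ↑(eT T hT ((eT T hT).symm ⟨w, hw⟩))
        rw [smF_coe]
      · rw [← coe_eC_symm T hTc (Finset.mem_compl.mpr hw), bigF_coeC]
        show (↑(eC T hTc (cmF T hTc x.1 (compl_closed T x.1 (closed_of_hx T x hx))
          ((eC T hTc).symm ⟨w, Finset.mem_compl.mpr hw⟩))) : Fin (2*(m+1+k))) =
          x.1.f ↑(eC T hTc ((eC T hTc).symm ⟨w, Finset.mem_compl.mpr hw⟩))
        rw [cmF_coe]
    · show ↑(eT T hT (FwD T hT x hx).a) = x.1.a
      rw [FwD_a]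
      exact coe_eT_symm T hT _
  · intro i
    show ↑(eT T hT (FwG T hT x hx i)) = ((x.2 i : _) : Fin (2*(m+1+k)))
    rw [FwG]
    exact coe_eT_symm T hT _

lemma card_fiber :
    Fintype.card {x : FullType (m+1+k) m // specialSet x = T} =
      Fintype.card (FullType (m+1) m) * (2*k-1)‼ := by
  classical
  have hbij : Function.Bijective
      (fun z : {x : FullType (m+1+k) m // specialSet x = T} =>
        ((FwFull T hT z.1 z.2, FwInv T hTc z.1 z.2) :
          FullType (m+1) m × FpfInv (Fin (2*k)))) := by
    rw [Function.bijective_iff_has_inverse]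
    refine ⟨fun y => ⟨Bw T hT hTc y.1 y.2, specialSet_Bw T hT hTc y.1 y.2⟩, ?_, ?_⟩
    · intro z
      apply Subtype.ext
      exact Bw_Fw T hT hTc z.1 z.2
    · intro y
      apply Prod.ext
      · exact FwFull_Bw T hT hTc y.1 y.2
      · exact FwInv_Bw T hT hTc y.1 y.2
  rw [Fintype.card_of_bijective hbij, Fintype.card_prod]
  congr 1
  exact card_fpfInv k (Fin (2*k)) (Fintype.card_fin _)

end Transport3

theorem card_fullType_big (m k : ℕ) :
    Fintype.card (FullType (m+1+k) m) =
      (2*(m+1+k)).choose (2*m+2) * ((m+1) * (Nat.factorial m * Nat.factorial m) * (2*k-1)‼) := by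
  classical
  have h1 : Fintype.card (FullType (m+1+k) m) =
      ∑ T : {T : Finset (Fin (2*(m+1+k))) // T.card = 2*m+2},
        Fintype.card {x : FullType (m+1+k) m //
          (⟨specialSet x, card_specialSet x⟩ : {T : Finset (Fin (2*(m+1+k))) // T.card = 2*m+2}) = T} := by
    rw [← Fintype.card_sigma]
    exact (Fintype.card_congr (Equiv.sigmaFiberEquiv _)).symm
  rw [h1]
  have h2 : ∀ T : {T : Finset (Fin (2*(m+1+k))) // T.card = 2*m+2},
      Fintype.card {x : FullType (m+1+k) m //
        (⟨specialSet x, card_specialSet x⟩ : {T : Finset (Fin (2*(m+1+k))) // T.card = 2*m+2}) = T}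
        = (m+1) * (Nat.factorial m * Nat.factorial m) * (2*k-1)‼ := by
    intro T
    have hT : T.1.card = 2*(m+1) := by have := T.2; omega
    have hTc : (T.1)ᶜ.card = 2*k := by
      rw [Finset.card_compl, Fintype.card_fin, T.2]
      omega
    have e1 : {x : FullType (m+1+k) m //
        (⟨specialSet x, card_specialSet x⟩ : {T : Finset (Fin (2*(m+1+k))) // T.card = 2*m+2}) = T}
        ≃ {x : FullType (m+1+k) m // specialSet x = T.1} :=
      Equiv.subtypeEquivRight (fun x => by rw [Subtype.ext_iff])
    rw [Fintype.card_congr e1, card_fiber T.1 hT hTc, card_fullType_small]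
  rw [Finset.sum_congr rfl (fun T _ => h2 T), Finset.sum_const, smul_eq_mul,
    Finset.card_univ, Fintype.card_finset_len, Fintype.card_fin]

lemma fact_two_mul (j : ℕ) : (2*j)! = 2^j * j.factorial * (2*j-1)‼ := by
  cases j with
  | zero => rfl
  | succ j =>
    have h1 : 2*(j+1) = (2*j+1)+1 := by ring
    rw [h1, Nat.factorial_eq_mul_doubleFactorial]
    have h2 : (2*j+1+1) = 2*(j+1) := by ring
    rw [h2, Nat.doubleFactorial_two_mul]
    have h3 : 2*(j+1)-1 = 2*j+1 := by omega
    rw [h3]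

theorem K_factorial_moment' (n m : ℕ) (hn : 1 ≤ n) (hm : m ≤ n - 1) :
    ∑ p ∈ Finset.range n, (Nat.descFactorial p m : ℝ) *
        ((Kcount n p : ℝ) / (n * Nat.doubleFactorial (2*n - 1))) =
      (Nat.descFactorial (n-1) m : ℝ) *
        (Nat.factorial m) / (Nat.doubleFactorial (2*m + 1)) := by
  obtain ⟨k, rfl⟩ : ∃ k, n = m+1+k := ⟨n-1-m, by omega⟩
  set n := m+1+k with hn'
  -- step 1 : sum = N / denom
  have hs : ∑ p ∈ Finset.range n, (Nat.descFactorial p m : ℝ) *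
      ((Kcount n p : ℝ) / (n * Nat.doubleFactorial (2*n - 1))) =
      ((Fintype.card (FullType n m) : ℝ)) / (n * Nat.doubleFactorial (2*n - 1)) := by
    rw [← step1 n m hn]
    rw [Nat.cast_sum]
    rw [Finset.sum_div]
    apply Finset.sum_congr rfl
    intro p _
    rw [Nat.cast_mul, mul_div_assoc]
  rw [hs, card_fullType_big m k]
  -- now pure arithmetic
  have hnm1 : n - 1 = m + k := by omega
  rw [hnm1]
  -- cast facts
  have c1 : ((2*n).choose (2*m+2) : ℝ) * ((2*m+2).factorial * (2*k).factorial) =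
      (2*n).factorial := by
    have h := Nat.choose_mul_factorial_mul_factorial (show 2*m+2 ≤ 2*n by omega)
    have h2 : 2*n - (2*m+2) = 2*k := by omega
    rw [h2] at h
    push_cast [← h]
    ring
  have c2 : ∀ j : ℕ, ((2*j).factorial : ℝ) = 2^j * j.factorial * ((2*j-1)‼ : ℕ) := by
    intro j
    rw [fact_two_mul j]
    push_cast
    ring
  have c3 : (((m+k).descFactorial m : ℕ) : ℝ) * (k.factorial) = ((m+k).factorial) := by
    have h := Nat.factorial_mul_descFactorial (show m ≤ m+k by omega)
    have h2 : m + k - m = k := by omega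
    rw [h2] at h
    push_cast [← h]
    ring
  have c4 : ((2*m+2).factorial : ℝ) = 2^(m+1) * (m+1).factorial * ((2*m+1)‼ : ℕ) := by
    have h := c2 (m+1)
    have h2 : 2*(m+1) = 2*m+2 := by ring
    have h3 : 2*(m+1)-1 = 2*m+1 := by omega
    rw [h3] at h
    rw [h2] at h
    exact h
  -- nonvanishing
  have hf : ∀ j : ℕ, (0:ℝ) < (j.factorial : ℝ) := fun j => by
    exact_mod_cast j.factorial_pos
  have hd : ∀ j : ℕ, (0:ℝ) < ((j‼ : ℕ) : ℝ) := fun j => by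
    exact_mod_cast j.doubleFactorial_pos
  have hp : ∀ j : ℕ, (0:ℝ) < (2:ℝ)^j := fun j => by positivity
  have hnpos : (0:ℝ) < (n:ℝ) := by
    have : 0 < n := by omega
    exact_mod_cast this
  -- express double factorials as quotients
  have e1 : (((2*n-1)‼ : ℕ) : ℝ) = ((2*n).factorial) / (2^n * n.factorial) := by
    rw [eq_div_iff (by positivity)]
    rw [c2 n]
    ring
  have e2 : (((2*k-1)‼ : ℕ) : ℝ) = ((2*k).factorial) / (2^k * k.factorial) := by
    rw [eq_div_iff (by positivity)]
    rw [c2 k]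
    ring
  have e3 : (((2*m+1)‼ : ℕ) : ℝ) = ((2*m+2).factorial) / (2^(m+1) * (m+1).factorial) := by
    rw [eq_div_iff (by positivity)]
    rw [c4]
    ring
  have e4 : (((2*n).choose (2*m+2) : ℕ) : ℝ) =
      ((2*n).factorial) / ((2*m+2).factorial * (2*k).factorial) := by
    rw [eq_div_iff (by positivity)]
    exact c1
  have e5 : (((m+k).descFactorial m : ℕ) : ℝ) = ((m+k).factorial) / (k.factorial) := by
    rw [eq_div_iff (by positivity)]
    exact c3
  have e6 : ((n.factorial : ℕ) : ℝ) = (n:ℝ) * ((m+k).factorial) := by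
    have : n = (m+k)+1 := by omega
    rw [this]
    push_cast [Nat.factorial_succ]
    try ring
  have e7 : (((m+1).factorial : ℕ) : ℝ) = ((m:ℝ)+1) * (m.factorial) := by
    push_cast [Nat.factorial_succ]
    try ring
  push_cast
  rw [e4, e2, e3, e5, e1, e6, e7]
  have h2n : (2:ℝ)^n = 2^(m+1) * 2^k := by
    rw [← pow_add]
  rw [h2n]
  field_simp
  try ring

theorem K_factorial_moment (n m : ℕ) (hn : 1 ≤ n) (hm : m ≤ n - 1) :
    ∑ p ∈ Finset.range n, (Nat.descFactorial p m : ℝ) *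
        ((Kcount n p : ℝ) / (n * Nat.doubleFactorial (2*n - 1))) =
      (Nat.descFactorial (n-1) m : ℝ) *
        (Nat.factorial m) / (Nat.doubleFactorial (2*m + 1)) := K_factorial_moment' n m hn hm
end

section
/- The number C_{n,p} of marked linear chord diagrams on 2n vertices in which exactly p other chords are contained within the marked chord satisfies C_{n,p} = n·(2n-1)!! · ∫₀¹ 2(1-α)·C(n-1,p)·(α²)^p·(1-α²)^{n-1-p} dα. -/
open scoped BigOperators

set_option linter.unusedSectionVars false
set_option maxHeartbeats 1000000

open scoped Nat

section MatchOn

variable {α : Type*} [DecidableEq α] [Fintype α]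

/-- Fixed-point-free involutions of `α` supported exactly on `s`. -/
def MatchOn (s : Finset α) : Type _ :=
  {f : α → α // (∀ x, f (f x) = x) ∧ ∀ x, f x ≠ x ↔ x ∈ s}

instance (s : Finset α) : Fintype (MatchOn s) := by unfold MatchOn; infer_instance
instance (s : Finset α) : DecidableEq (MatchOn s) := by unfold MatchOn; infer_instance

namespace MatchOn

theorem mem_of {s : Finset α} (f : MatchOn s) {x : α} (hx : x ∈ s) : f.1 x ∈ s := by
  by_contra h
  have h2 : f.1 (f.1 x) = f.1 x := by
    by_contra h3
    exact h ((f.2.2 (f.1 x)).mp h3)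
  rw [f.2.1 x] at h2
  exact (f.2.2 x).mpr hx h2.symm

end MatchOn

/-- Removing a fixed chord `{x,y}` from a matching. -/
def removeChordEquiv {s : Finset α} {x y : α} (hx : x ∈ s) (hy : y ∈ s) (hxy : x ≠ y) :
    {f : MatchOn s // f.1 x = y} ≃ MatchOn ((s.erase x).erase y) where
  toFun f := ⟨fun z => if z = x ∨ z = y then z else f.1.1 z, by
    have hinv := f.1.2.1
    have hmem := f.1.2.2
    have hfx : f.1.1 x = y := f.2
    have hfy : f.1.1 y = x := by
      have h0 := hinv x
      rwa [hfx] at h0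
    constructor
    · intro z
      by_cases hz : z = x ∨ z = y
      · simp [hz]
      · have h1 : ¬(f.1.1 z = x ∨ f.1.1 z = y) := by
          push_neg at hz ⊢
          constructor
          · intro h; apply hz.2
            have := congrArg f.1.1 h
            rwa [hinv, hfx] at this
          · intro h; apply hz.1
            have := congrArg f.1.1 h
            rwa [hinv, hfy] at this
        simp only [if_neg hz, if_neg h1, hinv]
    · intro z
      by_cases hz : z = x ∨ z = y
      · simp only [if_pos hz, ne_eq, not_true_eq_false, false_iff, Finset.mem_erase]
        rcases hz with h | h <;> subst h <;> tauto
      · push_neg at hz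
        simp only [if_neg (not_or.mpr hz), hmem z, Finset.mem_erase]
        tauto⟩
  invFun g := ⟨⟨fun z => if z = x then y else if z = y then x else g.1 z, by
    have hinv := g.2.1
    have hmem := g.2.2
    have hgz : ∀ z, z ≠ x → z ≠ y → g.1 z ≠ x ∧ g.1 z ≠ y := by
      intro z hzx hzy
      by_cases hz : z ∈ (s.erase x).erase y
      · have := MatchOn.mem_of g hz
        simp only [Finset.mem_erase] at this
        exact ⟨this.2.1, this.1⟩
      · have : g.1 z = z := by
          by_contra h3; exact hz ((hmem z).mp h3)
        rw [this]; exact ⟨hzx, hzy⟩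
    constructor
    · intro z
      by_cases hzx : z = x
      · simp [hzx, hxy.symm]
      · by_cases hzy : z = y
        · simp [hzy, hxy]
        · obtain ⟨h1, h2⟩ := hgz z hzx hzy
          simp only [if_neg hzx, if_neg hzy, if_neg h1, if_neg h2, hinv]
    · intro z
      by_cases hzx : z = x
      · subst hzx
        simp only [if_pos rfl]
        exact iff_of_true hxy.symm hx
      · by_cases hzy : z = y
        · subst hzy
          simp only [if_neg hzx, if_pos rfl]
          exact iff_of_true hxy hy
        · simp only [if_neg hzx, if_neg hzy, hmem z, Finset.mem_erase]
          tauto⟩, by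
    simp [hxy.symm]⟩
  left_inv f := by
    apply Subtype.ext; apply Subtype.ext; funext z
    have hfx : f.1.1 x = y := f.2
    have hfy : f.1.1 y = x := by
      have h0 := f.1.2.1 x
      rwa [hfx] at h0
    by_cases hzx : z = x
    · simp [hzx, hfx]
    · by_cases hzy : z = y
      · simp [hzy, hfy]
      · simp [hzx, hzy]
  right_inv g := by
    apply Subtype.ext; funext z
    by_cases hzx : z = x
    · have hg : g.1 x = x := by
        by_contra h3
        have h4 := (g.2.2 x).mp h3
        simp only [Finset.mem_erase] at h4
        exact h4.2.1 rfl
      simp only [if_pos (Or.inl hzx)]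
      rw [hzx, hg]
    · by_cases hzy : z = y
      · have hg : g.1 y = y := by
          by_contra h3
          have h4 := (g.2.2 y).mp h3
          simp only [Finset.mem_erase] at h4
          exact h4.1 rfl
        simp only [if_pos (Or.inr hzy)]
        rw [hzy, hg]
      · simp [hzx, hzy]

theorem removeChordEquiv_apply {s : Finset α} {x y : α} (hx : x ∈ s) (hy : y ∈ s) (hxy : x ≠ y)
    (f : {f : MatchOn s // f.1 x = y}) (z : α) (hzx : z ≠ x) (hzy : z ≠ y) :
    ((removeChordEquiv hx hy hxy) f).1 z = f.1.1 z := by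
  show (if z = x ∨ z = y then z else f.1.1 z) = f.1.1 z
  simp [removeChordEquiv, hzx, hzy]

end MatchOn


section CardGlue
variable {α : Type*} [DecidableEq α] [Fintype α]

theorem df_odd_succ (m : ℕ) : (2*m+1)‼ = (2*m+1) * (2*m-1)‼ := by
  cases m with
  | zero => rfl
  | succ k =>
    have : 2*(k+1)+1 = (2*k+1)+2 := by ring
    rw [this, Nat.doubleFactorial_add_two]
    congr 1 <;> omega

theorem card_matchOn : ∀ (m : ℕ) (s : Finset α), s.card = 2*m →
    Fintype.card (MatchOn s) = (2*m-1)‼ := by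
  intro m
  induction m with
  | zero =>
    intro s hs
    rw [Finset.card_eq_zero] at hs
    subst hs
    have h1 : (2*0-1)‼ = 1 := rfl
    rw [h1, Fintype.card_eq_one_iff]
    refine ⟨⟨id, fun x => rfl, by simp⟩, ?_⟩
    rintro ⟨f, hinv, hmem⟩
    apply Subtype.ext
    funext z
    have h2 : ¬ (f z ≠ z) := by simp [hmem z]
    simpa using h2
  | succ m ih =>
    intro s hs
    have hpos : 0 < s.card := by omega
    obtain ⟨x, hx⟩ := Finset.card_pos.mp hpos
    have hcard : Fintype.card (MatchOn s) =
        ∑ y : α, Fintype.card {f : MatchOn s // f.1 x = y} := by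
      rw [← Fintype.card_sigma]
      exact Fintype.card_congr (Equiv.sigmaFiberEquiv (fun f : MatchOn s => f.1 x)).symm
    rw [hcard]
    have hzero : ∀ y ∈ Finset.univ, y ∉ s.erase x →
        Fintype.card {f : MatchOn s // f.1 x = y} = 0 := by
      intro y _ hy
      rw [Fintype.card_eq_zero_iff]
      constructor
      rintro ⟨f, hf⟩
      apply hy
      rw [← hf]
      exact Finset.mem_erase.mpr ⟨(f.2.2 x).mpr hx, MatchOn.mem_of f hx⟩
    rw [← Finset.sum_subset (Finset.subset_univ (s.erase x)) hzero]
    have hval : ∀ y ∈ s.erase x,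
        Fintype.card {f : MatchOn s // f.1 x = y} = (2*m-1)‼ := by
      intro y hy
      rw [Finset.mem_erase] at hy
      have e2 := removeChordEquiv (s := s) (x := x) (y := y) hx hy.2 (Ne.symm hy.1)
      rw [Fintype.card_congr e2]
      apply ih
      rw [Finset.card_erase_of_mem, Finset.card_erase_of_mem hx]
      · omega
      · exact Finset.mem_erase.mpr ⟨hy.1, hy.2⟩
    rw [Finset.sum_congr rfl hval]
    rw [Finset.sum_const, Finset.card_erase_of_mem hx, smul_eq_mul]
    have h5 : 2*(m+1)-1 = 2*m+1 := by omega
    rw [h5, df_odd_succ]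
    congr 1
    omega



/-- Halving: the set of left endpoints of an involution on `s` has half the size. -/
theorem card_filter_lt_matching [LinearOrder β] (f : β → β) (s : Finset β)
    (hinv : ∀ x ∈ s, f (f x) = x) (hmap : ∀ x ∈ s, f x ∈ s) (hne : ∀ x ∈ s, f x ≠ x) :
    (s.filter (fun c => c < f c)).card * 2 = s.card := by
  classical
  have hunion : s = (s.filter (fun c => c < f c)) ∪ (s.filter (fun c => f c < c)) := by
    ext z
    simp only [Finset.mem_union, Finset.mem_filter]
    constructor
    · intro hz
      rcases lt_trichotomy z (f z) with h | h | h
      · exact Or.inl ⟨hz, h⟩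
      · exact absurd h.symm (hne z hz)
      · exact Or.inr ⟨hz, h⟩
    · rintro (h | h) <;> exact h.1
  have hdisj : Disjoint (s.filter (fun c => c < f c)) (s.filter (fun c => f c < c)) := by
    rw [Finset.disjoint_filter]
    intro z _ h1
    exact not_lt_of_gt h1
  have hbij : (s.filter (fun c => c < f c)).card = (s.filter (fun c => f c < c)).card := by
    apply Finset.card_bij (fun c _ => f c)
    · intro c hc
      rw [Finset.mem_filter] at hc ⊢
      refine ⟨hmap c hc.1, ?_⟩
      rw [hinv c hc.1]
      exact hc.2
    · intro c hc d hd h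
      rw [Finset.mem_filter] at hc hd
      have := congrArg f h
      rwa [hinv c hc.1, hinv d hd.1] at this
    · intro d hd
      rw [Finset.mem_filter] at hd
      refine ⟨f d, Finset.mem_filter.mpr ⟨hmap d hd.1, ?_⟩, (hinv d hd.1)⟩
      rw [hinv d hd.1]
      exact hd.2
  have hc := Finset.card_union_of_disjoint hdisj
  rw [← hunion] at hc
  omega

/-- Gluing two matchings on disjoint supports. -/
def glueEquiv {s t : Finset α} (hst : Disjoint s t) :
    {f : MatchOn (s ∪ t) // ∀ z ∈ s, f.1 z ∈ s} ≃ MatchOn s × MatchOn t where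
  toFun f := by
    refine ⟨⟨fun z => if z ∈ s then f.1.1 z else z, ?_, ?_⟩,
            ⟨fun z => if z ∈ t then f.1.1 z else z, ?_, ?_⟩⟩
    · intro z
      by_cases hz : z ∈ s
      · have h1 : f.1.1 z ∈ s := f.2 z hz
        simp only [if_pos hz, if_pos h1]
        exact f.1.2.1 z
      · simp [hz]
    · intro z
      by_cases hz : z ∈ s
      · simp only [if_pos hz, iff_true_intro hz, iff_true]
        exact (f.1.2.2 z).mpr (Finset.mem_union_left t hz)
      · simp [hz]
    · intro z
      by_cases hz : z ∈ t
      · have h0 : f.1.1 z ∈ t := by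
          have h1 : f.1.1 z ∈ s ∪ t := MatchOn.mem_of f.1 (Finset.mem_union_right s hz)
          rcases Finset.mem_union.mp h1 with h | h
          · exfalso
            have h2 : f.1.1 (f.1.1 z) ∈ s := f.2 _ h
            rw [f.1.2.1 z] at h2
            exact Finset.disjoint_left.mp hst h2 hz
          · exact h
        simp only [if_pos hz, if_pos h0]
        exact f.1.2.1 z
      · simp [hz]
    · intro z
      by_cases hz : z ∈ t
      · simp only [if_pos hz, iff_true_intro hz, iff_true]
        exact (f.1.2.2 z).mpr (Finset.mem_union_right s hz)
      · simp [hz]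
  invFun gh := by
    refine ⟨⟨fun z => if z ∈ s then gh.1.1 z else gh.2.1 z, ?_, ?_⟩, ?_⟩
    · intro z
      by_cases hz : z ∈ s
      · have h1 : gh.1.1 z ∈ s := MatchOn.mem_of gh.1 hz
        simp only [if_pos hz, if_pos h1]
        exact gh.1.2.1 z
      · by_cases hzt : z ∈ t
        · have h1 : gh.2.1 z ∈ t := MatchOn.mem_of gh.2 hzt
          have h2 : gh.2.1 z ∉ s := fun h => Finset.disjoint_left.mp hst h h1
          simp only [if_neg hz, if_neg h2]
          exact gh.2.2.1 z
        · have h1 : gh.2.1 z = z := by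
            by_contra h3
            exact hzt ((gh.2.2.2 z).mp h3)
          simp only [if_neg hz, h1, if_neg hz]
    · intro z
      by_cases hz : z ∈ s
      · simp only [if_pos hz]
        rw [gh.1.2.2 z]
        simp [hz]
      · simp only [if_neg hz]
        rw [gh.2.2.2 z]
        simp only [Finset.mem_union]
        tauto
    · intro z hz
      simp only [if_pos hz]
      exact MatchOn.mem_of gh.1 hz
  left_inv f := by
    apply Subtype.ext; apply Subtype.ext; funext z
    by_cases hz : z ∈ s
    · simp [hz]
    · simp only [if_neg hz]
      by_cases hzt : z ∈ t
      · simp [hzt]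
      · simp only [if_neg hzt]
        have h0 : f.1.1 z = z := by
          by_contra h3
          rcases Finset.mem_union.mp ((f.1.2.2 z).mp h3) with h | h
          · exact hz h
          · exact hzt h
        exact h0.symm
  right_inv gh := by
    obtain ⟨g, h⟩ := gh
    refine Prod.ext ?_ ?_ <;> apply Subtype.ext <;> funext z <;> simp only
    · by_cases hz : z ∈ s
      · simp [hz]
      · simp only [if_neg hz]
        have h0 : g.1 z = z := by
          by_contra h3
          exact hz ((g.2.2 z).mp h3)
        exact h0.symm
    · by_cases hz : z ∈ t
      · have hzs : z ∉ s := fun hh => Finset.disjoint_left.mp hst hh hz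
        simp [hz, hzs]
      · simp only [if_neg hz]
        have h0 : h.1 z = z := by
          by_contra h3
          exact hz ((h.2.2 z).mp h3)
        exact h0.symm


def matchOnCongr {s t : Finset α} (h : s = t) : MatchOn s ≃ MatchOn t := by
  subst h; exact Equiv.refl _
theorem matchOnCongr_apply {s t : Finset α} (h : s = t) (f : MatchOn s) :
    (matchOnCongr h f).1 = f.1 := by subst h; rfl

end CardGlue

namespace CIaux
open MarkedDiagram Finset
variable {n : ℕ}

def cl (D : MarkedDiagram n) : Finset (Fin (2*n)) :=
  Finset.univ.filter (fun c => c < D.f c ∧ D.a < c ∧ D.f c < D.b)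
theorem containedCount_eq (D : MarkedDiagram n) : D.containedCount = (cl D).card := rfl
theorem f_invol (D : MarkedDiagram n) (x : Fin (2*n)) : D.f (D.f x) = x := D.2.1 x
theorem f_ne (D : MarkedDiagram n) (x : Fin (2*n)) : D.f x ≠ x := D.2.2.1 x
theorem a_lt_b (D : MarkedDiagram n) : D.a < D.b := D.2.2.2
theorem f_a (D : MarkedDiagram n) : D.f D.a = D.b := rfl
theorem f_b (D : MarkedDiagram n) : D.f D.b = D.a := f_invol D D.a
theorem f_inj (D : MarkedDiagram n) : Function.Injective D.f :=
  Function.LeftInverse.injective D.2.1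

def P (n j : ℕ) : Finset ((_ : MarkedDiagram n) × Finset (Fin (2*n))) :=
  Finset.univ.sigma (fun D => (cl D).powersetCard j)

theorem mem_P_iff {j : ℕ} (q : (_ : MarkedDiagram n) × Finset (Fin (2*n))) :
    q ∈ P n j ↔ q.2 ⊆ cl q.1 ∧ q.2.card = j := by
  rw [P, Finset.mem_sigma, Finset.mem_powersetCard]
  simp

theorem mem_cl {D : MarkedDiagram n} {c : Fin (2*n)} (hc : c ∈ cl D) :
    c < D.f c ∧ D.a < c ∧ D.f c < D.b := (Finset.mem_filter.mp hc).2

def Phi (q : (_ : MarkedDiagram n) × Finset (Fin (2*n))) : Finset (Fin (2*n)) :=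
  insert q.1.a (insert q.1.b (q.2 ∪ q.2.image q.1.f))

section PhiFacts
variable {j : ℕ} {D : MarkedDiagram n} {S : Finset (Fin (2*n))} (hS : S ⊆ cl D)
include hS

theorem S_disj_im : Disjoint S (S.image D.f) := by
  rw [Finset.disjoint_left]
  intro c hc hc'
  obtain ⟨d, hd, hdc⟩ := Finset.mem_image.mp hc'
  have h1 := (mem_cl (hS hd)).1
  have h2 := (mem_cl (hS hc)).1
  rw [hdc] at h1
  rw [← hdc, f_invol, hdc] at h2
  exact absurd h1 (not_lt_of_gt h2)

theorem b_notin : D.b ∉ S ∪ S.image D.f := by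
  rw [Finset.mem_union]
  rintro (h | h)
  · have := mem_cl (hS h)
    exact absurd this.1 (not_lt_of_gt this.2.2)
  · obtain ⟨d, hd, hdb⟩ := Finset.mem_image.mp h
    have := mem_cl (hS hd)
    rw [hdb] at this
    exact lt_irrefl _ this.2.2

theorem a_notin : D.a ∉ insert D.b (S ∪ S.image D.f) := by
  rw [Finset.mem_insert, Finset.mem_union]
  rintro (h | h | h)
  · exact absurd h (ne_of_lt (a_lt_b D))
  · exact lt_irrefl _ (mem_cl (hS h)).2.1
  · obtain ⟨d, hd, hda⟩ := Finset.mem_image.mp h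
    have h1 := mem_cl (hS hd)
    rw [hda] at h1
    exact absurd h1.2.1 (not_lt_of_gt h1.1)

theorem Phi_card : (Phi ⟨D, S⟩).card = 2 * S.card + 2 := by
  rw [Phi, Finset.card_insert_of_notMem (a_notin hS),
      Finset.card_insert_of_notMem (b_notin hS),
      Finset.card_union_of_disjoint (S_disj_im hS),
      Finset.card_image_of_injective _ (f_inj D)]
  ring

theorem le_of_mem_Phi {z : Fin (2*n)} (hz : z ∈ Phi ⟨D, S⟩) : D.a ≤ z ∧ z ≤ D.b := by
  rw [Phi, Finset.mem_insert, Finset.mem_insert, Finset.mem_union] at hz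
  rcases hz with h | h | h | h
  · exact ⟨le_of_eq h.symm, h ▸ le_of_lt (a_lt_b D)⟩
  · exact ⟨h ▸ le_of_lt (a_lt_b D), le_of_eq h⟩
  · have := mem_cl (hS h)
    exact ⟨le_of_lt this.2.1, le_of_lt (this.1.trans this.2.2)⟩
  · obtain ⟨d, hd, hdz⟩ := Finset.mem_image.mp h
    have h1 := mem_cl (hS hd)
    rw [hdz] at h1
    exact ⟨le_of_lt ((h1.2.1).trans h1.1), le_of_lt h1.2.2⟩

omit hS in
theorem Phi_nonempty : (Phi ⟨D, S⟩).Nonempty := ⟨D.a, Finset.mem_insert_self _ _⟩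

theorem Phi_min : (Phi ⟨D, S⟩).min' (Phi_nonempty) = D.a := by
  apply le_antisymm
  · exact Finset.min'_le _ _ (Finset.mem_insert_self _ _)
  · exact (le_of_mem_Phi hS (Finset.min'_mem _ _)).1

theorem Phi_max : (Phi ⟨D, S⟩).max' (Phi_nonempty) = D.b := by
  apply le_antisymm
  · exact (le_of_mem_Phi hS (Finset.max'_mem _ _)).2
  · exact Finset.le_max' _ _ (Finset.mem_insert_of_mem (Finset.mem_insert_self _ _))

theorem Phi_mid : ((Phi ⟨D, S⟩).erase D.a).erase D.b = S ∪ S.image D.f := by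
  rw [Phi, Finset.erase_insert (a_notin hS), Finset.erase_insert (b_notin hS)]

theorem S_eq_filter : S = (S ∪ S.image D.f).filter (fun c => c < D.f c) := by
  ext c
  rw [Finset.mem_filter, Finset.mem_union]
  constructor
  · intro hc
    exact ⟨Or.inl hc, (mem_cl (hS hc)).1⟩
  · rintro ⟨h | h, hlt⟩
    · exact h
    · exfalso
      obtain ⟨d, hd, hdc⟩ := Finset.mem_image.mp h
      have h1 := (mem_cl (hS hd)).1
      rw [hdc] at h1
      rw [← hdc, f_invol, hdc] at hlt
      exact absurd h1 (not_lt_of_gt hlt)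

end PhiFacts

theorem countQ {j : ℕ} (hn : 1 ≤ n) (hj : j+1 ≤ n) (am bm : Fin (2*n)) (hamb : am < bm)
    (mid : Finset (Fin (2*n))) (hmidcard : mid.card = 2*j)
    (hmid_am : am ∉ mid) (hmid_bm : bm ∉ mid) :
    (Finset.univ.filter (fun D : MarkedDiagram n =>
        D.a = am ∧ D.b = bm ∧ ∀ z ∈ mid, D.f z ∈ mid)).card
      = (2*j-1)‼ * (2*(n-j-1)-1)‼ := by
  rw [← Fintype.card_subtype]
  have e0 : {D : MarkedDiagram n // D.a = am ∧ D.b = bm ∧ ∀ z ∈ mid, D.f z ∈ mid} ≃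
      {f : MatchOn (Finset.univ : Finset (Fin (2*n))) //
        f.1 am = bm ∧ ∀ z ∈ mid, f.1 z ∈ mid} := by
    refine ⟨fun De => ⟨⟨De.1.f, fun x => f_invol De.1 x,
        fun x => iff_of_true (f_ne De.1 x) (Finset.mem_univ x)⟩, ?_, De.2.2.2⟩,
      fun fe => ⟨⟨(fe.1.1, am), fun x => fe.1.2.1 x,
        fun x => (fe.1.2.2 x).mpr (Finset.mem_univ x), ?_⟩, rfl, ?_, fe.2.2⟩,
      fun De => ?_, fun fe => rfl⟩
    · obtain ⟨D, hDa, hDb, _⟩ := De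
      show D.f am = bm
      rw [← hDa, ← hDb]
      rfl
    · show am < fe.1.1 am
      rw [fe.2.1]
      exact hamb
    · show fe.1.1 am = bm
      exact fe.2.1
    · apply Subtype.ext
      apply Subtype.ext
      apply Prod.ext
      · rfl
      · exact De.2.1.symm
  rw [Fintype.card_congr e0]
  have eassoc : {f : MatchOn (Finset.univ : Finset (Fin (2*n))) //
        f.1 am = bm ∧ ∀ z ∈ mid, f.1 z ∈ mid} ≃
      {fe : {f : MatchOn (Finset.univ : Finset (Fin (2*n))) // f.1 am = bm} //
        ∀ z ∈ mid, fe.1.1 z ∈ mid} :=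
    ⟨fun x => ⟨⟨x.1, x.2.1⟩, x.2.2⟩, fun y => ⟨y.1.1, y.1.2, y.2⟩,
      fun x => rfl, fun y => rfl⟩
  rw [Fintype.card_congr eassoc]
  have hne : am ≠ bm := ne_of_lt hamb
  have erc := Equiv.subtypeEquiv
    (removeChordEquiv (Finset.mem_univ am) (Finset.mem_univ bm) hne)
    (p := fun fe : {f : MatchOn (Finset.univ : Finset (Fin (2*n))) // f.1 am = bm} =>
      ∀ z ∈ mid, fe.1.1 z ∈ mid)
    (q := fun g => ∀ z ∈ mid, g.1 z ∈ mid)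
    (fun fe => by
      refine forall₂_congr (fun z hz => ?_)
      have hzam : z ≠ am := fun h => hmid_am (h ▸ hz)
      have hzbm : z ≠ bm := fun h => hmid_bm (h ▸ hz)
      rw [removeChordEquiv_apply _ _ _ _ z hzam hzbm])
  rw [Fintype.card_congr erc]
  set s'' := ((Finset.univ : Finset (Fin (2*n))).erase am).erase bm with hs''
  have hsub : mid ⊆ s'' := by
    intro z hz
    rw [hs'', Finset.mem_erase, Finset.mem_erase]
    exact ⟨fun h => hmid_bm (h ▸ hz), fun h => hmid_am (h ▸ hz), Finset.mem_univ z⟩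
  have hsplit : mid ∪ (s'' \ mid) = s'' := Finset.union_sdiff_of_subset hsub
  have econgr : {g : MatchOn s'' // ∀ z ∈ mid, g.1 z ∈ mid} ≃
      {g : MatchOn (mid ∪ (s'' \ mid)) // ∀ z ∈ mid, g.1 z ∈ mid} :=
    Equiv.subtypeEquiv (matchOnCongr hsplit.symm)
      (fun g => by
        refine forall₂_congr (fun z hz => ?_)
        rw [matchOnCongr_apply])
  rw [Fintype.card_congr econgr]
  rw [Fintype.card_congr (glueEquiv Finset.disjoint_sdiff)]
  have hs''card : s''.card = 2*n - 2 := by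
    rw [hs'', Finset.card_erase_of_mem, Finset.card_erase_of_mem (Finset.mem_univ am)]
    · rw [Finset.card_univ, Fintype.card_fin]
      omega
    · exact Finset.mem_erase.mpr ⟨hne.symm, Finset.mem_univ bm⟩
  have houtcard : (s'' \ mid).card = 2*(n-j-1) := by
    rw [Finset.card_sdiff_of_subset hsub, hs''card, hmidcard]
    omega
  rw [Fintype.card_prod, card_matchOn j mid hmidcard, card_matchOn (n-j-1) _ houtcard]

theorem fiber_card {j : ℕ} (hn : 1 ≤ n) (hj : j + 1 ≤ n) (A : Finset (Fin (2*n)))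
    (hA : A.card = 2*j+2) :
    ((P n j).filter (fun q => Phi q = A)).card
      = (2*j-1)‼ * (2*(n-j-1)-1)‼ := by
  have hAne : A.Nonempty := Finset.card_pos.mp (by omega)
  have hamA : A.min' hAne ∈ A := A.min'_mem hAne
  have hbmA : A.max' hAne ∈ A := A.max'_mem hAne
  have hamb : A.min' hAne < A.max' hAne := A.min'_lt_max'_of_card (by omega)
  set am := A.min' hAne
  set bm := A.max' hAne
  set mid := (A.erase am).erase bm with hmiddef
  have hbm_mem : bm ∈ A.erase am := Finset.mem_erase.mpr ⟨ne_of_gt hamb, hbmA⟩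
  have hmidcard : mid.card = 2*j := by
    rw [hmiddef, Finset.card_erase_of_mem hbm_mem, Finset.card_erase_of_mem hamA]
    omega
  have hmid_am : am ∉ mid := fun h => (Finset.mem_erase.mp (Finset.mem_erase.mp h).2).1 rfl
  have hmid_bm : bm ∉ mid := fun h => (Finset.mem_erase.mp h).1 rfl
  have hmem_mid : ∀ z ∈ mid, am < z ∧ z < bm := by
    intro z hz
    rw [hmiddef, Finset.mem_erase, Finset.mem_erase] at hz
    exact ⟨lt_of_le_of_ne (A.min'_le z hz.2.2) (Ne.symm hz.2.1),
           lt_of_le_of_ne (A.le_max' z hz.2.2) hz.1⟩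
  rw [← countQ hn hj am bm hamb mid hmidcard hmid_am hmid_bm]
  apply Finset.card_bij (fun q _ => q.1)
  · -- maps to Q
    rintro ⟨D, S⟩ hq
    rw [Finset.mem_filter] at hq
    obtain ⟨hP, hPhi⟩ := hq
    rw [mem_P_iff] at hP
    obtain ⟨hS, hScard⟩ := hP
    have haA : D.a ∈ A := hPhi ▸ Finset.mem_insert_self _ _
    have hbA : D.b ∈ A := hPhi ▸ Finset.mem_insert_of_mem (Finset.mem_insert_self _ _)
    have hDa : D.a = am := by
      apply le_antisymm
      · exact (le_of_mem_Phi hS (hPhi.symm ▸ hamA)).1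
      · exact A.min'_le _ haA
    have hDb : D.b = bm := by
      apply le_antisymm
      · exact A.le_max' _ hbA
      · exact (le_of_mem_Phi hS (hPhi.symm ▸ hbmA)).2
    have hmid2 : mid = S ∪ S.image D.f := by
      rw [hmiddef, ← hPhi, ← hDa, ← hDb]
      exact Phi_mid hS
    rw [Finset.mem_filter]
    refine ⟨Finset.mem_univ _, hDa, hDb, ?_⟩
    intro z hz
    rw [hmid2, Finset.mem_union] at hz ⊢
    rcases hz with h | h
    · exact Or.inr (Finset.mem_image_of_mem _ h)
    · obtain ⟨d, hd, hdz⟩ := Finset.mem_image.mp h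
      left
      rw [← hdz, f_invol]
      exact hd
  · -- injective
    rintro ⟨D, S⟩ hq ⟨D', S'⟩ hq' h
    simp only at h
    subst h
    rw [Finset.mem_filter, mem_P_iff] at hq hq'
    obtain ⟨⟨hS, _⟩, hPhi⟩ := hq
    obtain ⟨⟨hS', _⟩, hPhi'⟩ := hq'
    have h1 : S = ((Phi ⟨D, S⟩ : Finset (Fin (2*n))).erase D.a |>.erase D.b).filter
        (fun c => c < D.f c) := by
      rw [Phi_mid hS]
      exact S_eq_filter hS
    have h2 : S' = ((Phi ⟨D, S'⟩ : Finset (Fin (2*n))).erase D.a |>.erase D.b).filter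
        (fun c => c < D.f c) := by
      rw [Phi_mid hS']
      exact S_eq_filter hS'
    have : S = S' := by
      rw [h1, h2, hPhi, hPhi']
    rw [this]
  · -- surjective
    intro D hD
    rw [Finset.mem_filter] at hD
    obtain ⟨_, hDa, hDb, hpres⟩ := hD
    refine ⟨⟨D, mid.filter (fun c => c < D.f c)⟩, ?_, rfl⟩
    set S := mid.filter (fun c => c < D.f c) with hSdef
    have hSsub : S ⊆ mid := Finset.filter_subset _ _
    have hScl : S ⊆ cl D := by
      intro c hc
      have hcmid : c ∈ mid := hSsub hc
      have hclt : c < D.f c := (Finset.mem_filter.mp hc).2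
      have hfcmid : D.f c ∈ mid := hpres c hcmid
      rw [cl, Finset.mem_filter]
      refine ⟨Finset.mem_univ _, hclt, ?_, ?_⟩
      · rw [hDa]; exact (hmem_mid c hcmid).1
      · rw [hDb]; exact (hmem_mid _ hfcmid).2
    have hScard : S.card = j := by
      have h := card_filter_lt_matching D.f mid (fun x _ => f_invol D x)
        hpres (fun x _ => f_ne D x)
      rw [hmidcard] at h
      rw [hSdef]
      omega
    have hunion : S ∪ S.image D.f = mid := by
      apply Finset.Subset.antisymm
      · apply Finset.union_subset hSsub
        intro z hz
        obtain ⟨d, hd, hdz⟩ := Finset.mem_image.mp hz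
        rw [← hdz]
        exact hpres d (hSsub hd)
      · intro z hz
        rw [Finset.mem_union]
        rcases lt_trichotomy z (D.f z) with h | h | h
        · exact Or.inl (Finset.mem_filter.mpr ⟨hz, h⟩)
        · exact absurd h.symm (f_ne D z)
        · refine Or.inr (Finset.mem_image.mpr ⟨D.f z, ?_, f_invol D z⟩)
          refine Finset.mem_filter.mpr ⟨hpres z hz, ?_⟩
          rw [f_invol]
          exact h
    rw [Finset.mem_filter, mem_P_iff]
    refine ⟨⟨hScl, hScard⟩, ?_⟩
    show insert D.a (insert D.b (S ∪ S.image D.f)) = A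
    rw [hunion, hDa, hDb]
    ext z
    simp only [Finset.mem_insert, hmiddef, Finset.mem_erase]
    constructor
    · rintro (h | h | h)
      · exact h ▸ hamA
      · exact h ▸ hbmA
      · exact h.2.2
    · intro hz
      by_cases h1 : z = am
      · exact Or.inl h1
      · by_cases h2 : z = bm
        · exact Or.inr (Or.inl h2)
        · exact Or.inr (Or.inr ⟨h2, h1, hz⟩)

theorem sumB {j : ℕ} (hn : 1 ≤ n) (hj : j + 1 ≤ n) :
    (P n j).card = Nat.choose (2*n) (2*j+2) * ((2*j-1)‼ * (2*(n-j-1)-1)‼) := by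
  have hmaps : ∀ q ∈ P n j, Phi q ∈ (Finset.univ : Finset (Fin (2*n))).powersetCard (2*j+2) := by
    rintro ⟨D, S⟩ hq
    rw [mem_P_iff] at hq
    rw [Finset.mem_powersetCard_univ]
    rw [Phi_card hq.1, hq.2]
  rw [Finset.card_eq_sum_card_fiberwise hmaps]
  rw [Finset.sum_congr rfl (fun A hA => fiber_card hn hj A (Finset.mem_powersetCard_univ.mp hA))]
  rw [Finset.sum_const, smul_eq_mul, Finset.card_powersetCard, Finset.card_univ, Fintype.card_fin]




theorem poly_int (k : ℕ) :
    ∫ α in (0:ℝ)..1, (2*α^(2*k) - 2*α^(2*k+1))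
      = 1/((2*(k:ℝ)+1)*((k:ℝ)+1)) := by
  have h1 : IntervalIntegrable (fun α : ℝ => 2*α^(2*k)) MeasureTheory.volume 0 1 :=
    Continuous.intervalIntegrable (by fun_prop) 0 1
  have h2 : IntervalIntegrable (fun α : ℝ => 2*α^(2*k+1)) MeasureTheory.volume 0 1 :=
    Continuous.intervalIntegrable (by fun_prop) 0 1
  rw [intervalIntegral.integral_sub h1 h2, intervalIntegral.integral_const_mul,
    intervalIntegral.integral_const_mul, integral_pow, integral_pow]
  have e1 : ((2*k : ℕ) : ℝ) + 1 ≠ 0 := by positivity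
  have e2 : ((2*k+1 : ℕ) : ℝ) + 1 ≠ 0 := by positivity
  rw [one_pow, one_pow, zero_pow (by omega), zero_pow (by omega)]
  push_cast
  have h3 : (2*(k:ℝ)+1) ≠ 0 := by positivity
  have h4 : ((k:ℝ)+1) ≠ 0 := by positivity
  field_simp
  ring

theorem integrand_expand (p q : ℕ) (C : ℝ) (α : ℝ) :
    2*(1-α) * C * (α^2)^p * (1 - α^2)^q
      = ∑ i ∈ Finset.range (q+1),
          ((-1:ℝ)^i * C * ((q.choose i : ℕ) : ℝ) * (2*α^(2*(p+i)) - 2*α^(2*(p+i)+1))) := by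
  have h : (1 - α^2) = -(α^2) + 1 := by ring
  rw [h, add_pow, Finset.mul_sum]
  apply Finset.sum_congr rfl
  intro i hi
  have hneg : (-(α^2))^i = (-1:ℝ)^i * (α^2)^i := by
    rw [neg_pow]
  rw [hneg, one_pow]
  have hpow : (α^2)^p * (α^2)^i = α^(2*(p+i)) := by
    rw [← pow_add, ← pow_mul, mul_comm 2 (p+i)]
  calc 2*(1-α) * C * (α^2)^p * ((-1:ℝ)^i * (α^2)^i * 1 * (q.choose i : ℝ))
      = ((-1:ℝ)^i * C * (q.choose i : ℝ)) * ((2 - 2*α) * ((α^2)^p * (α^2)^i)) := by ring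
    _ = ((-1:ℝ)^i * C * (q.choose i : ℝ)) * ((2 - 2*α) * α^(2*(p+i))) := by rw [hpow]
    _ = (-1:ℝ)^i * C * (q.choose i : ℝ) * (2*α^(2*(p+i)) - 2*α^(2*(p+i)+1)) := by ring

theorem integral_eval (p q : ℕ) (C : ℝ) :
    (∫ α in (0:ℝ)..1, 2*(1-α) * C * (α^2)^p * (1 - α^2)^q)
      = ∑ i ∈ Finset.range (q+1),
          (-1:ℝ)^i * C * ((q.choose i : ℕ) : ℝ) * (1/((2*((p:ℝ)+i)+1)*(((p:ℝ)+i)+1))) := by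
  rw [intervalIntegral.integral_congr (g := fun α => ∑ i ∈ Finset.range (q+1),
          ((-1:ℝ)^i * C * ((q.choose i : ℕ) : ℝ) * (2*α^(2*(p+i)) - 2*α^(2*(p+i)+1))))
      (fun α _ => integrand_expand p q C α)]
  rw [intervalIntegral.integral_finset_sum (fun i _ =>
    Continuous.intervalIntegrable (by fun_prop) 0 1)]
  apply Finset.sum_congr rfl
  intro i _
  rw [intervalIntegral.integral_const_mul, poly_int (p+i)]
  push_cast
  ring



theorem two_pow_mul_fact_mul_df (m : ℕ) : 2^m * m ! * ((2*m-1)‼) = (2*m)! := by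
  induction m with
  | zero => rfl
  | succ m ih =>
    have h1 : 2*(m+1)-1 = 2*m+1 := by omega
    have h2 : 2*(m+1) = 2*m+1+1 := by omega
    rw [h1, df_odd_succ, h2, Nat.factorial_succ, Nat.factorial_succ, Nat.factorial_succ, ← ih]
    ring

theorem df_cast (m : ℕ) : (((2*m-1)‼ : ℕ) : ℝ) = (2*m)! / (2^m * m !) := by
  rw [eq_div_iff (by positivity)]
  have h := congrArg (Nat.cast : ℕ → ℝ) (two_pow_mul_fact_mul_df m)
  push_cast at h
  linarith [h]

theorem idIII (n j : ℕ) (hj : j + 1 ≤ n) :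
    (n : ℝ) * (((2*n-1)‼ : ℕ) : ℝ) * (((n-1).choose j : ℕ) : ℝ)
      = (2*(j:ℝ)+1) * ((j:ℝ)+1) *
        ((((2*n).choose (2*j+2) : ℕ) : ℝ) *
          ((((2*j-1)‼ : ℕ) : ℝ) * (((2*(n-j-1)-1)‼ : ℕ) : ℝ))) := by
  obtain ⟨r, rfl⟩ : ∃ r, n = j + r + 1 := ⟨n - j - 1, by omega⟩
  have hs1 : j + r + 1 - 1 = j + r := by omega
  have hs2 : j + r + 1 - j - 1 = r := by omega
  rw [hs1, hs2]
  rw [df_cast (j+r+1), df_cast j, df_cast r]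
  rw [Nat.cast_choose ℝ (show j ≤ j + r by omega)]
  rw [Nat.cast_choose ℝ (show 2*j+2 ≤ 2*(j+r+1) by omega)]
  have hs3 : j + r - j = r := by omega
  have hs4 : 2*(j+r+1) - (2*j+2) = 2*r := by omega
  rw [hs3, hs4]
  have e1 : ((2*j+2)! : ℕ) = (2*j+2)*((2*j+1)*(2*j)!) := by
    have h : 2*j+2 = (2*j+1)+1 := by omega
    rw [h, Nat.factorial_succ, Nat.factorial_succ]
  have e2 : ((j+r+1)! : ℕ) = (j+r+1)*(j+r)! := Nat.factorial_succ _
  rw [e1, e2]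
  have hfne : ∀ m : ℕ, ((m ! : ℕ) : ℝ) ≠ 0 :=
    fun m => Nat.cast_ne_zero.mpr (Nat.factorial_ne_zero m)
  have n1 := hfne j
  have n2 := hfne r
  have n3 := hfne (j+r)
  have n4 := hfne (2*j)
  have n5 := hfne (2*r)
  push_cast at n1 n2 n3 n4 n5 ⊢
  have hp1 : (2:ℝ)^(j+r+1) = 2^j * 2^r * 2 := by
    rw [pow_add, pow_add, pow_one]
  rw [hp1]
  field_simp


theorem card_left (D : MarkedDiagram n) :
    (Finset.univ.filter (fun c : Fin (2*n) => c < D.f c)).card = n := by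
  have h := card_filter_lt_matching D.f Finset.univ
    (fun x _ => f_invol D x) (fun x _ => Finset.mem_univ _) (fun x _ => f_ne D x)
  rw [Finset.card_univ, Fintype.card_fin] at h
  omega

theorem cc_lt (D : MarkedDiagram n) : D.containedCount < n := by
  have hsub : cl D ⊆ (Finset.univ.filter (fun c : Fin (2*n) => c < D.f c)).erase D.a := by
    intro c hc
    rw [cl, Finset.mem_filter] at hc
    rw [Finset.mem_erase, Finset.mem_filter]
    exact ⟨ne_of_gt hc.2.2.1, Finset.mem_univ _, hc.2.1⟩
  have h1 := Finset.card_le_card hsub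
  have h2 : D.a ∈ Finset.univ.filter (fun c : Fin (2*n) => c < D.f c) := by
    rw [Finset.mem_filter]
    exact ⟨Finset.mem_univ _, a_lt_b D⟩
  rw [Finset.card_erase_of_mem h2, card_left D] at h1
  have h3 : 0 < n := by
    by_contra h
    have : (2 : ℕ) * n = 0 := by omega
    exact absurd (a_lt_b D) (by rw [Fin.lt_def]; omega)
  rw [containedCount_eq]
  omega


theorem Ccount_eq_card (n q : ℕ) :
    Ccount n q = (Finset.univ.filter (fun D : MarkedDiagram n => D.containedCount = q)).card :=
  Fintype.card_subtype _

theorem sumA (n j : ℕ) :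
    (P n j).card = ∑ q ∈ Finset.range n, Ccount n q * Nat.choose q j := by
  rw [P, Finset.card_sigma]
  have h1 : ∀ D : MarkedDiagram n, ((cl D).powersetCard j).card = (D.containedCount).choose j := by
    intro D
    rw [Finset.card_powersetCard, containedCount_eq]
  rw [Finset.sum_congr rfl (fun D _ => h1 D)]
  rw [← Finset.sum_fiberwise_of_maps_to
    (g := fun D : MarkedDiagram n => D.containedCount) (t := Finset.range n)
    (fun D _ => Finset.mem_range.mpr (cc_lt D))]
  apply Finset.sum_congr rfl
  intro q _
  rw [Finset.sum_congr rfl (fun D hD => by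
    rw [(Finset.mem_filter.mp hD).2]), Finset.sum_const, smul_eq_mul, Ccount_eq_card]


theorem keyCount {n : ℕ} {j : ℕ} (hn : 1 ≤ n) (hj : j + 1 ≤ n) :
    ∑ q ∈ Finset.range n, Ccount n q * Nat.choose q j
      = Nat.choose (2*n) (2*j+2) * ((2*j-1)‼ * (2*(n-j-1)-1)‼) := by
  rw [← sumA, sumB hn hj]

theorem inner_sum (p q n : ℕ) (hq : q < n) :
    ∑ j ∈ Finset.range n, (-1:ℝ)^j * (j.choose p : ℝ) * (q.choose j : ℝ)
      = if q = p then (-1:ℝ)^p else 0 := by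
  rw [← Finset.sum_subset (Finset.range_subset_range.mpr (show q+1 ≤ n by omega))
      (fun j _ hj => by
        rw [Finset.mem_range, not_lt] at hj
        rw [Nat.choose_eq_zero_of_lt (by omega : q < j)]
        simp)]
  by_cases hpq : p ≤ q
  · rw [← Finset.sum_range_add_sum_Ico _ (show p ≤ q+1 by omega)]
    have hz : ∑ j ∈ Finset.range p, (-1:ℝ)^j * (j.choose p : ℝ) * (q.choose j : ℝ) = 0 := by
      apply Finset.sum_eq_zero
      intro j hj
      rw [Finset.mem_range] at hj
      rw [Nat.choose_eq_zero_of_lt hj]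
      simp
    rw [hz, zero_add, Finset.sum_Ico_eq_sum_range]
    have hlen : q + 1 - p = (q - p) + 1 := by omega
    rw [hlen]
    have hterm : ∀ i ∈ Finset.range ((q-p)+1),
        (-1:ℝ)^(p+i) * ((p+i).choose p : ℝ) * (q.choose (p+i) : ℝ)
          = ((-1:ℝ)^p * (q.choose p : ℝ)) * ((-1:ℝ)^i * ((q-p).choose i : ℝ)) := by
      intro i hi
      rw [Finset.mem_range] at hi
      have hc : q.choose (p+i) * (p+i).choose p = q.choose p * (q-p).choose i := by
        have h := Nat.choose_mul (n := q) (show p ≤ p + i by omega)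
        simpa using h
      have hc' : ((p+i).choose p : ℝ) * (q.choose (p+i) : ℝ)
          = (q.choose p : ℝ) * ((q-p).choose i : ℝ) := by
        exact_mod_cast (by rw [mul_comm]; exact_mod_cast congrArg (Nat.cast (R := ℝ)) hc)
      rw [pow_add]
      calc (-1:ℝ)^p * (-1)^i * ((p+i).choose p : ℝ) * (q.choose (p+i) : ℝ)
          = (-1:ℝ)^p * (-1)^i * (((p+i).choose p : ℝ) * (q.choose (p+i) : ℝ)) := by ring
        _ = (-1:ℝ)^p * (-1)^i * ((q.choose p : ℝ) * ((q-p).choose i : ℝ)) := by rw [hc']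
        _ = ((-1:ℝ)^p * (q.choose p : ℝ)) * ((-1:ℝ)^i * ((q-p).choose i : ℝ)) := by ring
    rw [Finset.sum_congr rfl hterm, ← Finset.mul_sum]
    have halt : ∑ i ∈ Finset.range ((q-p)+1), (-1:ℝ)^i * ((q-p).choose i : ℝ)
        = if q - p = 0 then 1 else 0 := by
      have h := Int.alternating_sum_range_choose (n := q - p)
      have h2 := congrArg (fun z : ℤ => (z : ℝ)) h
      push_cast at h2
      rw [h2]
    rw [halt]
    by_cases hqp : q = p
    · subst hqp
      simp
    · rw [if_neg (by omega), if_neg hqp]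
      ring
  · rw [if_neg (by omega)]
    apply Finset.sum_eq_zero
    intro j hj
    rw [Finset.mem_range] at hj
    rw [Nat.choose_eq_zero_of_lt (show j < p by omega)]
    simp

def TT (n j : ℕ) : ℝ := (((2*n).choose (2*j+2) : ℕ) : ℝ) *
      ((((2*j-1)‼ : ℕ) : ℝ) * (((2*(n-j-1)-1)‼ : ℕ) : ℝ))

theorem idIII' (n j : ℕ) (hj : j + 1 ≤ n) :
    (n : ℝ) * (((2*n-1)‼ : ℕ) : ℝ) * (((n-1).choose j : ℕ) : ℝ)
      = (2*(j:ℝ)+1) * ((j:ℝ)+1) * TT n j := idIII n j hj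

theorem TTsum {n j : ℕ} (hn : 1 ≤ n) (hj : j + 1 ≤ n) :
    TT n j = ∑ q' ∈ Finset.range n, (Ccount n q' : ℝ) * ((q'.choose j : ℕ) : ℝ) := by
  have h := keyCount (n := n) (j := j) hn hj
  have h2 := congrArg (Nat.cast (R := ℝ)) h
  push_cast at h2
  rw [TT]
  push_cast
  exact h2.symm

theorem main_calc (n p : ℕ) (hn : 1 ≤ n) (hp : p ≤ n - 1) :
    (Ccount n p : ℝ) = (n * Nat.doubleFactorial (2*n - 1)) *
      ∫ α in (0:ℝ)..1, 2*(1-α) * (Nat.choose (n-1) p : ℝ) *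
        (α^2)^p * (1 - α^2)^(n-1-p) := by
  rw [integral_eval p (n-1-p) ((Nat.choose (n-1) p : ℕ) : ℝ)]
  have hpq : p + (n-1-p) + 1 = n := by omega
  rw [Finset.mul_sum]
  have hterm : ∀ i ∈ Finset.range ((n-1-p)+1),
      ((n : ℝ) * (Nat.doubleFactorial (2*n-1) : ℕ)) *
        ((-1:ℝ)^i * ((Nat.choose (n-1) p : ℕ) : ℝ) * (((n-1-p).choose i : ℕ) : ℝ)
          * (1/((2*((p:ℝ)+i)+1)*(((p:ℝ)+i)+1))))
      = (-1:ℝ)^p * ((-1:ℝ)^(p+i) * (((p+i).choose p : ℕ) : ℝ) * TT n (p+i)) := by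
    intro i hi
    rw [Finset.mem_range] at hi
    have hD : ((2*((p:ℝ)+i)+1)*(((p:ℝ)+i)+1)) ≠ 0 := by positivity
    have h1 := idIII' n (p+i) (by omega)
    push_cast at h1
    have hc : (n-1).choose (p+i) * (p+i).choose p = (n-1).choose p * (n-1-p).choose i := by
      have h := Nat.choose_mul (n := n-1) (show p ≤ p + i by omega)
      simpa using h
    have hc' : (((n-1).choose p : ℕ) : ℝ) * (((n-1-p).choose i : ℕ) : ℝ)
        = (((n-1).choose (p+i) : ℕ) : ℝ) * (((p+i).choose p : ℕ) : ℝ) := by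
      exact_mod_cast (congrArg (Nat.cast (R := ℝ)) hc).symm
    have hsign : (-1:ℝ)^p * (-1:ℝ)^(p+i) = (-1:ℝ)^i := by
      rw [← pow_add]
      have he : p + (p + i) = 2*p + i := by ring
      rw [he, pow_add, pow_mul]
      norm_num
    rw [show ((n : ℝ) * (Nat.doubleFactorial (2*n-1) : ℕ)) *
        ((-1:ℝ)^i * ((Nat.choose (n-1) p : ℕ) : ℝ) * (((n-1-p).choose i : ℕ) : ℝ)
          * (1/((2*((p:ℝ)+i)+1)*(((p:ℝ)+i)+1))))
      = (((n : ℝ) * (Nat.doubleFactorial (2*n-1) : ℕ)) *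
        ((-1:ℝ)^i * ((Nat.choose (n-1) p : ℕ) : ℝ) * (((n-1-p).choose i : ℕ) : ℝ)))
          / ((2*((p:ℝ)+i)+1)*(((p:ℝ)+i)+1)) from by ring]
    rw [div_eq_iff hD]
    push_cast
    linear_combination ((-1:ℝ)^i * ((n : ℝ) * ((Nat.doubleFactorial (2*n-1) : ℕ) : ℝ))) * hc'
      + ((-1:ℝ)^i * (((p+i).choose p : ℕ) : ℝ)) * h1
      - ((((p+i).choose p : ℕ) : ℝ) * TT n (p+i) * ((2*((p:ℝ)+i)+1)*(((p:ℝ)+i)+1))) * hsign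
  rw [Finset.sum_congr rfl hterm, ← Finset.mul_sum]
  -- reindex
  have hre : ∑ j ∈ Finset.Ico p n, ((-1:ℝ)^j * ((j.choose p : ℕ) : ℝ) * TT n j)
      = ∑ i ∈ Finset.range ((n-1-p)+1),
          ((-1:ℝ)^(p+i) * (((p+i).choose p : ℕ) : ℝ) * TT n (p+i)) := by
    rw [Finset.sum_Ico_eq_sum_range]
    have : n - p = (n-1-p) + 1 := by omega
    rw [this]
  rw [← hre]
  have hsplit : ∑ j ∈ Finset.range p, ((-1:ℝ)^j * ((j.choose p : ℕ) : ℝ) * TT n j)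
      + ∑ j ∈ Finset.Ico p n, ((-1:ℝ)^j * ((j.choose p : ℕ) : ℝ) * TT n j)
      = ∑ j ∈ Finset.range n, ((-1:ℝ)^j * ((j.choose p : ℕ) : ℝ) * TT n j) :=
    Finset.sum_range_add_sum_Ico _ (by omega)
  have hz : ∑ j ∈ Finset.range p, ((-1:ℝ)^j * ((j.choose p : ℕ) : ℝ) * TT n j) = 0 := by
    apply Finset.sum_eq_zero
    intro j hj
    rw [Finset.mem_range] at hj
    rw [Nat.choose_eq_zero_of_lt hj]
    simp
  have hIco : ∑ j ∈ Finset.Ico p n, ((-1:ℝ)^j * ((j.choose p : ℕ) : ℝ) * TT n j)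
      = ∑ j ∈ Finset.range n, ((-1:ℝ)^j * ((j.choose p : ℕ) : ℝ) * TT n j) := by
    rw [← hsplit, hz, zero_add]
  rw [hIco]
  -- expand TT and swap sums
  have hexp : ∑ j ∈ Finset.range n, ((-1:ℝ)^j * ((j.choose p : ℕ) : ℝ) * TT n j)
      = ∑ q' ∈ Finset.range n, (Ccount n q' : ℝ) *
          (∑ j ∈ Finset.range n, (-1:ℝ)^j * ((j.choose p : ℕ) : ℝ) * ((q'.choose j : ℕ) : ℝ)) := by
    rw [Finset.sum_congr rfl (fun j hj => by
      rw [TTsum hn (Finset.mem_range.mp hj), Finset.mul_sum])]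
    rw [Finset.sum_comm]
    apply Finset.sum_congr rfl
    intro q' _
    rw [Finset.mul_sum]
    apply Finset.sum_congr rfl
    intro j _
    ring
  rw [hexp]
  rw [Finset.sum_congr rfl (fun q' hq' => by
    rw [inner_sum p q' n (Finset.mem_range.mp hq')])]
  rw [Finset.sum_eq_single p
    (fun q' _ hne => by rw [if_neg hne, mul_zero])
    (fun habs => absurd (Finset.mem_range.mpr (by omega)) habs)]
  rw [if_pos rfl]
  have hone : (-1:ℝ)^p * (-1:ℝ)^p = 1 := by
    rw [← pow_add]
    have he : p + p = 2*p := by ring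
    rw [he, pow_mul]
    norm_num
  calc (Ccount n p : ℝ) = ((Ccount n p : ℝ) * (-1:ℝ)^p) * (-1:ℝ)^p := by
        rw [mul_assoc, hone, mul_one]
    _ = (-1:ℝ)^p * ((Ccount n p : ℝ) * (-1:ℝ)^p) := by ring

end CIaux

theorem C_integral (n p : ℕ) (hn : 1 ≤ n) (hp : p ≤ n - 1) :
    (Ccount n p : ℝ) = (n * Nat.doubleFactorial (2*n - 1)) *
      ∫ α in (0:ℝ)..1, 2*(1-α) * (Nat.choose (n-1) p : ℝ) *
        (α^2)^p * (1 - α^2)^(n-1-p) :=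
  CIaux.main_calc n p hn hp
end
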